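/- arXiv:1910.11785 — 5 statements merged into one kernel-verified Lean document; each statement's English description precedes it below -/
import Mathlib

section
/- Let α > 0 and L > 0. For each integer k ≥ 1 define f_k : ℝ³ → ℝ by f_k(x) = k²/π if x₁² + x₂² ≤ 1/k² and 0 ≤ x₃ ≤ L, and f_k(x) = 0 otherwise. Then (f_k) is a Cauchy sequence in the weighted space L²_{α+1}: the quantity ∫_{ℝ³} (f_{k+m}(x) − f_k(x))² (x₁² + x₂²)^{α+1} dx tends to 0 as k → ∞, uniformly in m ≥ 0; consequently the sequence converges to a limit in L²(ℝ³, (x₁²+x₂²)^{α+1} dx). -/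
open MeasureTheory Real Filter

open scoped Classical in
/-- The nascent Dirac function of radius `1/k` around the segment
`Λ = {(0,0,z) : 0 ≤ z ≤ L}`, of unit measure per arc length. -/
noncomputable def nascentDirac (L : ℝ) (k : ℕ) (x : EuclideanSpace ℝ (Fin 3)) : ℝ :=
  if x 0 ^ 2 + x 1 ^ 2 ≤ 1 / (k : ℝ) ^ 2 ∧ 0 ≤ x 2 ∧ x 2 ≤ L then (k : ℝ) ^ 2 / Real.pi else 0

namespace CauchyAux

/-- A box containing the support of `nascentDirac`. -/
def cbox (a L : ℝ) : Set (EuclideanSpace ℝ (Fin 3)) :=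
  {x | |x 0| ≤ a ∧ |x 1| ≤ a ∧ 0 ≤ x 2 ∧ x 2 ≤ L}

def sides (a L : ℝ) : Fin 3 → Set ℝ := fun i =>
  if i.val ≤ 1 then Set.Icc (-a) a else Set.Icc 0 L

lemma cbox_eq (a L : ℝ) :
    cbox a L = (MeasurableEquiv.toLp 2 (Fin 3 → ℝ)).symm ⁻¹' (Set.univ.pi (sides a L)) := by
  ext x
  simp only [cbox, Set.mem_setOf_eq, Set.mem_preimage, Set.mem_univ_pi, sides]
  constructor
  · rintro ⟨h0, h1, h2, h3⟩ i
    fin_cases i <;> simp_all [abs_le, MeasurableEquiv.coe_toLp_symm]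
  · intro h
    have h0 := h 0
    have h1 := h 1
    have h2 := h 2
    simp [MeasurableEquiv.coe_toLp_symm, abs_le] at h0 h1 h2
    exact ⟨abs_le.2 h0, abs_le.2 h1, h2.1, h2.2⟩

lemma measurableSet_sides (a L : ℝ) : MeasurableSet (Set.univ.pi (sides a L)) :=
  MeasurableSet.univ_pi fun i => by unfold sides; split <;> exact measurableSet_Icc

lemma measurableSet_cbox (a L : ℝ) : MeasurableSet (cbox a L) := by
  rw [cbox_eq]
  exact (MeasurableEquiv.toLp 2 (Fin 3 → ℝ)).symm.measurable (measurableSet_sides a L)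

lemma volume_cbox (a L : ℝ) (_ha : 0 ≤ a) (_hL : 0 ≤ L) :
    volume (cbox a L) = ENNReal.ofReal (2 * a) * ENNReal.ofReal (2 * a) * ENNReal.ofReal L := by
  rw [cbox_eq,
    (EuclideanSpace.volume_preserving_symm_measurableEquiv_toLp (Fin 3)).measure_preimage
      (measurableSet_sides a L).nullMeasurableSet,
    volume_pi_pi, Fin.prod_univ_three]
  simp only [sides]
  norm_num [Real.volume_Icc]
  ring_nf
  rw [ENNReal.ofReal_mul' (by norm_num), ENNReal.ofReal_ofNat]; ring

lemma volume_cbox_lt_top (a L : ℝ) (ha : 0 ≤ a) (hL : 0 ≤ L) : volume (cbox a L) < ⊤ := by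
  rw [volume_cbox a L ha hL]
  exact ENNReal.mul_lt_top (ENNReal.mul_lt_top ENNReal.ofReal_lt_top ENNReal.ofReal_lt_top)
    ENNReal.ofReal_lt_top

lemma integrable_ind (a L c : ℝ) (ha : 0 ≤ a) (hL : 0 ≤ L) :
    Integrable ((cbox a L).indicator fun _ => c) := by
  rw [integrable_indicator_iff (measurableSet_cbox a L)]
  exact integrableOn_const (volume_cbox_lt_top a L ha hL).ne

lemma integral_ind (a L c : ℝ) (ha : 0 ≤ a) (hL : 0 ≤ L) :
    ∫ x : EuclideanSpace ℝ (Fin 3), (cbox a L).indicator (fun _ => c) x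
      = c * (2 * a * (2 * a) * L) := by
  rw [integral_indicator (measurableSet_cbox a L), setIntegral_const, measureReal_def,
    volume_cbox a L ha hL, ENNReal.toReal_mul, ENNReal.toReal_mul,
    ENNReal.toReal_ofReal (by linarith : (0:ℝ) ≤ 2 * a),
    ENNReal.toReal_ofReal hL, smul_eq_mul]
  ring

noncomputable def bconst (α : ℝ) (k : ℕ) : ℝ :=
  (k : ℝ) ^ 4 / Real.pi ^ 2 * ((1 : ℝ) / (k : ℝ) ^ 2) ^ (α + 1)

lemma bconst_nonneg (α : ℝ) (k : ℕ) : 0 ≤ bconst α k := by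
  unfold bconst; positivity

lemma pointwise_bound (α L : ℝ) (hα : 0 < α) (k : ℕ) (x : EuclideanSpace ℝ (Fin 3)) :
    (nascentDirac L k x) ^ 2 * (x 0 ^ 2 + x 1 ^ 2) ^ (α + 1)
      ≤ (cbox (1 / (k : ℝ)) L).indicator (fun _ => bconst α k) x := by
  unfold nascentDirac
  split_ifs with h
  · obtain ⟨hr, hz0, hzL⟩ := h
    have hk0 : (0:ℝ) ≤ 1 / (k:ℝ) := by positivity
    have habs0 : |x 0| ≤ 1 / (k:ℝ) := by
      nlinarith [sq_abs (x 0), sq_nonneg (x 1), abs_nonneg (x 0), one_div_pow (k:ℝ) 2]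
    have habs1 : |x 1| ≤ 1 / (k:ℝ) := by
      nlinarith [sq_abs (x 1), sq_nonneg (x 0), abs_nonneg (x 1), one_div_pow (k:ℝ) 2]
    have hx : x ∈ cbox (1 / (k:ℝ)) L := ⟨habs0, habs1, hz0, hzL⟩
    rw [Set.indicator_of_mem hx]
    unfold bconst
    rw [show ((k:ℝ) ^ 2 / Real.pi) ^ 2 = (k:ℝ) ^ 4 / Real.pi ^ 2 from by ring]
    have hw : (x 0 ^ 2 + x 1 ^ 2) ^ (α + 1) ≤ ((1:ℝ) / (k:ℝ) ^ 2) ^ (α + 1) :=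
      Real.rpow_le_rpow (by positivity) hr (by linarith)
    exact mul_le_mul_of_nonneg_left hw (by positivity)
  · rw [zero_pow two_ne_zero, zero_mul]
    exact Set.indicator_nonneg (fun _ _ => bconst_nonneg α k) x

lemma bconst_mul (α L : ℝ) (k : ℕ) (hk : 1 ≤ k) :
    bconst α k * (2 * (1 / (k:ℝ)) * (2 * (1 / (k:ℝ))) * L)
      = 4 * L / Real.pi ^ 2 * (k : ℝ) ^ (-(2 * α)) := by
  have hk0 : (0:ℝ) < (k:ℝ) := by exact_mod_cast hk
  have hπ : Real.pi ≠ 0 := Real.pi_ne_zero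
  have e1 : ((1:ℝ) / (k:ℝ) ^ 2) ^ (α + 1) = (k:ℝ) ^ (-(2 * (α + 1))) := by
    rw [one_div, ← Real.rpow_natCast (k:ℝ) 2, ← Real.rpow_neg hk0.le,
      ← Real.rpow_mul hk0.le]
    norm_num
  have e2 : (k:ℝ) ^ (-(2 * α)) = (k:ℝ) ^ ((4:ℝ) + (-(2 * (α + 1))) + (-1) + (-1)) := by
    congr 1; ring
  have e3 : (k:ℝ) ^ ((4:ℝ)) = (k:ℝ) ^ (4:ℕ) := by
    rw [← Real.rpow_natCast (k:ℝ) 4]; norm_num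
  unfold bconst
  rw [e1, e2, Real.rpow_add hk0, Real.rpow_add hk0, Real.rpow_add hk0, Real.rpow_neg_one, e3]
  field_simp
  ring

lemma integral_sq_le (α L : ℝ) (hα : 0 < α) (hL : 0 < L) (k : ℕ) (hk : 1 ≤ k) :
    (∫ x : EuclideanSpace ℝ (Fin 3),
        (nascentDirac L k x) ^ 2 * (x 0 ^ 2 + x 1 ^ 2) ^ (α + 1))
      ≤ 4 * L / Real.pi ^ 2 * (k : ℝ) ^ (-(2 * α)) := by
  have ha : (0:ℝ) ≤ 1 / (k:ℝ) := by positivity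
  calc (∫ x : EuclideanSpace ℝ (Fin 3),
        (nascentDirac L k x) ^ 2 * (x 0 ^ 2 + x 1 ^ 2) ^ (α + 1))
      ≤ ∫ x : EuclideanSpace ℝ (Fin 3),
          (cbox (1 / (k:ℝ)) L).indicator (fun _ => bconst α k) x := by
        apply integral_mono_of_nonneg
        · exact ae_of_all _ fun x => by positivity
        · exact integrable_ind _ _ _ ha hL.le
        · exact ae_of_all _ (pointwise_bound α L hα k)
    _ = bconst α k * (2 * (1 / (k:ℝ)) * (2 * (1 / (k:ℝ))) * L) :=
        integral_ind _ _ _ ha hL.le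
    _ = 4 * L / Real.pi ^ 2 * (k : ℝ) ^ (-(2 * α)) := bconst_mul α L k hk

end CauchyAux

theorem cauchy_in_weighted_L2 (α L : ℝ) (hα : 0 < α) (hL : 0 < L) :
    (∀ ε > 0, ∃ N : ℕ, 1 ≤ N ∧ ∀ k ≥ N, ∀ m : ℕ,
      (∫ x : EuclideanSpace ℝ (Fin 3),
        (nascentDirac L (k + m) x - nascentDirac L k x) ^ 2 *
          (x 0 ^ 2 + x 1 ^ 2) ^ (α + 1)) < ε) ∧
    ∃ g : EuclideanSpace ℝ (Fin 3) → ℝ,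
      Tendsto (fun k : ℕ => ∫ x : EuclideanSpace ℝ (Fin 3),
          (nascentDirac L k x - g x) ^ 2 * (x 0 ^ 2 + x 1 ^ 2) ^ (α + 1))
        atTop (nhds 0) := by
  classical
  set D : ℕ → ℝ := fun k => 4 * L / Real.pi ^ 2 * (k : ℝ) ^ (-(2 * α)) with hD
  have hDnonneg : ∀ k, 0 ≤ D k := fun k => by
    simp only [hD]; positivity
  have hDmono : ∀ k m : ℕ, 1 ≤ k → D (k + m) ≤ D k := by
    intro k m hk
    have hk0 : (0:ℝ) < (k:ℝ) := by exact_mod_cast hk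
    have h1 : ((k + m : ℕ) : ℝ) ^ (-(2 * α)) ≤ (k:ℝ) ^ (-(2 * α)) := by
      rw [Real.rpow_neg (by positivity), Real.rpow_neg hk0.le]
      have hle : (k:ℝ) ^ (2 * α) ≤ ((k + m : ℕ) : ℝ) ^ (2 * α) :=
        Real.rpow_le_rpow hk0.le (by exact_mod_cast Nat.le_add_right k m) (by linarith)
      exact inv_anti₀ (Real.rpow_pos_of_pos hk0 _) hle
    simp only [hD]
    have : (0:ℝ) ≤ 4 * L / Real.pi ^ 2 := by positivity
    exact mul_le_mul_of_nonneg_left h1 this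
  have hDtend : Tendsto D atTop (nhds 0) := by
    have h1 : Tendsto (fun k : ℕ => (k : ℝ) ^ (-(2 * α))) atTop (nhds 0) :=
      (tendsto_rpow_neg_atTop (by linarith : 0 < 2 * α)).comp tendsto_natCast_atTop_atTop
    have := h1.const_mul (4 * L / Real.pi ^ 2)
    simpa [hD] using this
  -- part 1 bound for the difference
  have hdiff : ∀ k : ℕ, 1 ≤ k → ∀ m : ℕ,
      (∫ x : EuclideanSpace ℝ (Fin 3),
        (nascentDirac L (k + m) x - nascentDirac L k x) ^ 2 *
          (x 0 ^ 2 + x 1 ^ 2) ^ (α + 1)) ≤ 4 * D k := by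
    intro k hk m
    have hkm : 1 ≤ k + m := le_trans hk (Nat.le_add_right k m)
    have ha : (0:ℝ) ≤ 1 / (k:ℝ) := by positivity
    have ha' : (0:ℝ) ≤ 1 / ((k + m : ℕ):ℝ) := by positivity
    set G : EuclideanSpace ℝ (Fin 3) → ℝ := fun x =>
      2 * (CauchyAux.cbox (1 / ((k + m : ℕ):ℝ)) L).indicator (fun _ => CauchyAux.bconst α (k + m)) x
      + 2 * (CauchyAux.cbox (1 / (k:ℝ)) L).indicator (fun _ => CauchyAux.bconst α k) x with hG
    have hGint : Integrable G :=
      ((CauchyAux.integrable_ind _ _ _ ha' hL.le).const_mul 2).add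
        ((CauchyAux.integrable_ind _ _ _ ha hL.le).const_mul 2)
    have hptw : ∀ x, (nascentDirac L (k + m) x - nascentDirac L k x) ^ 2 *
          (x 0 ^ 2 + x 1 ^ 2) ^ (α + 1) ≤ G x := by
      intro x
      have h1 := CauchyAux.pointwise_bound α L hα (k + m) x
      have h2 := CauchyAux.pointwise_bound α L hα k x
      have hw : (0:ℝ) ≤ (x 0 ^ 2 + x 1 ^ 2) ^ (α + 1) := by positivity
      simp only [hG]
      nlinarith [mul_nonneg (sq_nonneg (nascentDirac L (k + m) x + nascentDirac L k x)) hw]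
    calc (∫ x : EuclideanSpace ℝ (Fin 3),
            (nascentDirac L (k + m) x - nascentDirac L k x) ^ 2 *
              (x 0 ^ 2 + x 1 ^ 2) ^ (α + 1))
        ≤ ∫ x, G x := by
          apply integral_mono_of_nonneg (ae_of_all _ fun x => by positivity) hGint
            (ae_of_all _ hptw)
      _ = 2 * (CauchyAux.bconst α (k + m) *
              (2 * (1 / ((k + m : ℕ):ℝ)) * (2 * (1 / ((k + m : ℕ):ℝ))) * L))
          + 2 * (CauchyAux.bconst α k * (2 * (1 / (k:ℝ)) * (2 * (1 / (k:ℝ))) * L)) := by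
          simp only [hG]
          rw [integral_add ((CauchyAux.integrable_ind _ _ _ ha' hL.le).const_mul 2)
            ((CauchyAux.integrable_ind _ _ _ ha hL.le).const_mul 2),
            integral_const_mul, integral_const_mul,
            CauchyAux.integral_ind _ _ _ ha' hL.le, CauchyAux.integral_ind _ _ _ ha hL.le]
      _ = 2 * D (k + m) + 2 * D k := by
          rw [CauchyAux.bconst_mul α L (k + m) hkm, CauchyAux.bconst_mul α L k hk]
      _ ≤ 4 * D k := by
          have := hDmono k m hk
          linarith
  constructor
  · intro ε hε
    have h4 : Tendsto (fun k : ℕ => 4 * D k) atTop (nhds 0) := by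
      have := hDtend.const_mul (4:ℝ)
      simpa using this
    have hev : ∀ᶠ k in atTop, 4 * D k < ε := h4.eventually (gt_mem_nhds hε)
    obtain ⟨N₀, hN₀⟩ := eventually_atTop.1 hev
    refine ⟨max N₀ 1, le_max_right _ _, fun k hk m => ?_⟩
    have hk1 : 1 ≤ k := le_trans (le_max_right _ _) hk
    have hkN₀ : N₀ ≤ k := le_trans (le_max_left _ _) hk
    exact lt_of_le_of_lt (hdiff k hk1 m) (hN₀ k hkN₀)
  · refine ⟨0, ?_⟩
    apply squeeze_zero' (g := D)
    · exact Eventually.of_forall fun k => integral_nonneg fun x => by positivity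
    · filter_upwards [eventually_ge_atTop 1] with k hk
      simp only [Pi.zero_apply, sub_zero]
      exact CauchyAux.integral_sq_le α L hα hL k hk
    · exact hDtend
end

section
/- Let a, b ∈ ℝ³ with a ≠ b, set L = ‖b − a‖ and τ = (b − a)/L, and let x ∈ ℝ³ be a point not lying on the line {a + tτ : t ∈ ℝ}. Then ∫₀^L 1/(4π ‖x − (a + sτ)‖) ds = (1/(4π)) ln( (‖x − b‖ + L + τ·(a − x)) / (‖x − a‖ + τ·(a − x)) ). In particular both the numerator and the denominator inside the logarithm are strictly positive. -/
open MeasureTheory Real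

theorem newtonian_potential_of_segment_formula
    (a b x : EuclideanSpace ℝ (Fin 3)) (hab : a ≠ b)
    (L : ℝ) (hL : L = ‖b - a‖)
    (τ : EuclideanSpace ℝ (Fin 3)) (hτ : τ = L⁻¹ • (b - a))
    (hx : ∀ t : ℝ, x ≠ a + t • τ) :
    0 < ‖x - b‖ + L + (inner ℝ τ (a - x) : ℝ) ∧
    0 < ‖x - a‖ + (inner ℝ τ (a - x) : ℝ) ∧
    (∫ s in (0:ℝ)..L, 1 / (4 * Real.pi * ‖x - (a + s • τ)‖))
      = (1 / (4 * Real.pi)) *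
        Real.log ((‖x - b‖ + L + (inner ℝ τ (a - x) : ℝ)) /
          (‖x - a‖ + (inner ℝ τ (a - x) : ℝ))) := by
  have hLpos : 0 < L := by
    rw [hL]; exact norm_sub_pos_iff.mpr (Ne.symm hab)
  set c : ℝ := inner ℝ τ (a - x) with hc
  have hτ1 : ‖τ‖ = 1 := by
    rw [hτ, norm_smul, norm_inv, Real.norm_eq_abs, abs_of_pos hLpos, ← hL,
      inv_mul_cancel₀ hLpos.ne']
  set D : ℝ := ‖x - a‖ ^ 2 - c ^ 2 with hD
  have hr : ∀ s : ℝ, ‖x - (a + s • τ)‖ ^ 2 = (s + c) ^ 2 + D := by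
    intro s
    have h1 : x - (a + s • τ) = (x - a) - s • τ := by abel
    have h2 : (inner ℝ (x - a) (s • τ) : ℝ) = s * (-c) := by
      rw [real_inner_smul_right]
      congr 1
      rw [real_inner_comm, hc, show a - x = -(x - a) by abel, inner_neg_right, neg_neg]
    rw [h1, norm_sub_sq_real, h2, norm_smul, hτ1,
      Real.norm_eq_abs, mul_one, sq_abs, hD]
    ring
  have hDpos : 0 < D := by
    have h := hr (-c)
    have hne : x - (a + (-c) • τ) ≠ 0 := sub_ne_zero.mpr (hx (-c))
    have hpos : 0 < ‖x - (a + (-c) • τ)‖ := norm_pos_iff.mpr hne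
    nlinarith [h]
  set d : ℝ := Real.sqrt D with hdd
  have hd : 0 < d := Real.sqrt_pos.mpr hDpos
  have hd2 : d ^ 2 = D := Real.sq_sqrt hDpos.le
  have rs_eq : ∀ s : ℝ, ‖x - (a + s • τ)‖ = Real.sqrt ((s + c) ^ 2 + D) := by
    intro s
    rw [← hr s, Real.sqrt_sq (norm_nonneg _)]
  have hxa : ‖x - a‖ = Real.sqrt (c ^ 2 + D) := by
    have h := rs_eq 0
    simpa using h
  have hbL : b = a + L • τ := by
    rw [hτ, smul_smul, mul_inv_cancel₀ hLpos.ne', one_smul]; abel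
  have hxb : ‖x - b‖ = Real.sqrt ((L + c) ^ 2 + D) := by
    rw [hbL]; exact rs_eq L
  have key : ∀ y : ℝ, -y < Real.sqrt (y ^ 2 + D) := by
    intro y
    calc -y ≤ |y| := neg_le_abs y
      _ = Real.sqrt (y ^ 2) := (Real.sqrt_sq_eq_abs y).symm
      _ < Real.sqrt (y ^ 2 + D) := Real.sqrt_lt_sqrt (sq_nonneg y) (by linarith)
  have pos1 : 0 < ‖x - b‖ + L + c := by have := key (L + c); rw [hxb]; linarith
  have pos2 : 0 < ‖x - a‖ + c := by have := key c; rw [hxa]; linarith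
  refine ⟨pos1, pos2, ?_⟩
  have hsqrt_div : ∀ y : ℝ, Real.sqrt (1 + (y / d) ^ 2) = Real.sqrt (y ^ 2 + D) / d := by
    intro y
    have h0 : 1 + (y / d) ^ 2 = (y ^ 2 + D) / d ^ 2 := by
      rw [← hd2]; field_simp; ring
    rw [h0, Real.sqrt_div (by positivity), Real.sqrt_sq hd.le]
  set F : ℝ → ℝ := fun s => (1 / (4 * Real.pi)) * Real.arsinh ((s + c) / d) with hF
  have hπ : (0:ℝ) < Real.pi := Real.pi_pos
  have hderiv : ∀ s : ℝ, HasDerivAt F (1 / (4 * Real.pi * ‖x - (a + s • τ)‖)) s := by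
    intro s
    have h1 : HasDerivAt (fun s : ℝ => (s + c) / d) (1 / d) s := by
      simpa using ((hasDerivAt_id s).add_const c).div_const d
    have h2 := (Real.hasDerivAt_arsinh ((s + c) / d)).comp s h1
    have h3 := h2.const_mul (1 / (4 * Real.pi))
    refine h3.congr_deriv ?_
    rw [rs_eq s, hsqrt_div]
    have hs : 0 < Real.sqrt ((s + c) ^ 2 + D) := Real.sqrt_pos.mpr (by positivity)
    field_simp
  have hcontnorm : Continuous fun s : ℝ => ‖x - (a + s • τ)‖ :=
    (continuous_const.sub (continuous_const.add (continuous_id.smul continuous_const))).norm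
  have hcont : Continuous fun s : ℝ => 1 / (4 * Real.pi * ‖x - (a + s • τ)‖) := by
    apply continuous_const.div (continuous_const.mul hcontnorm)
    intro s
    have : 0 < ‖x - (a + s • τ)‖ := norm_pos_iff.mpr (sub_ne_zero.mpr (hx s))
    exact (mul_pos (by positivity) this).ne'
  have hint : (∫ s in (0:ℝ)..L, 1 / (4 * Real.pi * ‖x - (a + s • τ)‖)) = F L - F 0 :=
    intervalIntegral.integral_eq_sub_of_hasDerivAt (fun s _ => hderiv s)
      (hcont.intervalIntegrable 0 L)
  have harsinh : ∀ y : ℝ, Real.arsinh (y / d) =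
      Real.log (y + Real.sqrt (y ^ 2 + D)) - Real.log d := by
    intro y
    rw [← Real.log_exp (Real.arsinh (y / d)), Real.exp_arsinh, hsqrt_div, ← add_div,
      Real.log_div (by have := key y; linarith) hd.ne']
  have hA : (L + c) + Real.sqrt ((L + c) ^ 2 + D) = ‖x - b‖ + L + c := by
    rw [hxb]; ring
  have hB : c + Real.sqrt (c ^ 2 + D) = ‖x - a‖ + c := by
    rw [hxa]; ring
  rw [hint, hF]
  simp only [zero_add]
  rw [harsinh (L + c), harsinh c, hA, hB,
    Real.log_div pos1.ne' pos2.ne']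
  ring
end

section
/- Let a, b ∈ ℝ³ with a ≠ b, L = ‖b − a‖, τ = (b − a)/L, and define G(x) = ∫₀^L 1/(4π ‖x − (a + sτ)‖) ds. Then for every x ∈ ℝ³ not in the closed segment [a, b], G is differentiable at x and its directional derivative along τ satisfies τ · ∇G(x) = (1/(4π)) ( 1/‖x − a‖ − 1/‖x − b‖ ). -/
open MeasureTheory Real

/-!
Near a point `x` off the segment the integrand `1 / ‖y - (a + s • τ)‖` and its derivative in `y`
are bounded uniformly in `s`, so `G` can be differentiated under the integral sign. Moving `y`
along `τ` is the same as moving the source point backwards along the line, so the integrand of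
`τ · ∇G(x)` is an exact `s`-derivative and the fundamental theorem of calculus leaves only the
endpoint values `1 / ‖x - a‖` and `1 / ‖x - b‖`.
-/

open Set

theorem IsClosed.exists_pos_forall_le_dist {X : Type*} [PseudoMetricSpace X] {K : Set X}
    (hK : IsClosed K) {x : X} (hx : x ∉ K) :
    ∃ r > 0, ∀ y ∈ Metric.ball x r, ∀ z ∈ K, r ≤ dist y z := by
  obtain ⟨ε, hε, hball⟩ := Metric.isOpen_iff.1 hK.isOpen_compl x hx
  refine ⟨ε / 2, half_pos hε, fun y hy z hz => ?_⟩
  have hxz : ε ≤ dist x z := not_lt.1 fun h => hball (Metric.mem_ball'.2 h) hz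
  linarith [dist_triangle x y z, Metric.mem_ball'.1 hy]

section InverseNorm

variable {E : Type*} [NormedAddCommGroup E] [InnerProductSpace ℝ E]

theorem hasFDerivAt_norm_of_ne_zero {v : E} (hv : v ≠ 0) :
    HasFDerivAt (‖·‖) (‖v‖⁻¹ • innerSL ℝ v) v := by
  have h := (hasStrictFDerivAt_norm_sq v).hasFDerivAt.sqrt (by positivity)
  simp only [sqrt_sq (norm_nonneg _)] at h
  refine h.congr_fderiv ?_
  ext w
  simp only [smul_apply, two_smul, smul_add, ← add_smul]
  congr 1
  field_simp
  ring

theorem hasFDerivAt_inv_norm {v : E} (hv : v ≠ 0) :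
    HasFDerivAt (fun w : E => ‖w‖⁻¹) (-(‖v‖ ^ 3)⁻¹ • innerSL ℝ v) v := by
  refine ((hasDerivAt_inv (norm_ne_zero_iff.2 hv)).comp_hasFDerivAt v
    (hasFDerivAt_norm_of_ne_zero hv)).congr_fderiv ?_
  rw [smul_smul]
  ring_nf

theorem norm_fderiv_inv_norm (v : E) : ‖-(‖v‖ ^ 3)⁻¹ • innerSL ℝ v‖ = (‖v‖ ^ 2)⁻¹ := by
  rw [norm_smul, innerSL_apply_norm, norm_neg, norm_inv, norm_pow, norm_norm]
  rcases eq_or_ne ‖v‖ 0 with hv | hv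
  · simp [hv]
  · field_simp

theorem continuousOn_fderiv_inv_norm :
    ContinuousOn (fun v : E => -(‖v‖ ^ 3)⁻¹ • innerSL ℝ v) {0}ᶜ :=
  (continuous_norm.pow 3).continuousOn.inv₀ (fun _ hv => pow_ne_zero 3 (norm_ne_zero_iff.2 hv))
    |>.neg.smul (innerSL ℝ).continuous.continuousOn

end InverseNorm

section CurvePotential

variable {E : Type*} [NormedAddCommGroup E] [InnerProductSpace ℝ E] {c d : ℝ} {x : E}

theorem continuousOn_fderiv_inv_norm_sub {p : ℝ → E} (hp : Continuous p)
    (hx : x ∉ p '' uIcc c d) :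
    ContinuousOn (fun s => -(‖x - p s‖ ^ 3)⁻¹ • innerSL ℝ (x - p s)) (uIcc c d) :=
  continuousOn_fderiv_inv_norm.comp (continuous_const.sub hp).continuousOn
    fun s hs hxs => hx ⟨s, hs, (sub_eq_zero.1 hxs).symm⟩

theorem hasFDerivAt_intervalIntegral_inv_norm_sub {p : ℝ → E} (hp : Continuous p)
    (hx : x ∉ p '' uIcc c d) :
    HasFDerivAt (fun y => ∫ s in c..d, ‖y - p s‖⁻¹)
      (∫ s in c..d, -(‖x - p s‖ ^ 3)⁻¹ • innerSL ℝ (x - p s)) x := by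
  obtain ⟨r, hr, hsep⟩ := (isCompact_uIcc.image hp).isClosed.exists_pos_forall_le_dist hx
  have hfar : ∀ s ∈ uIcc c d, ∀ y ∈ Metric.ball x r, r ≤ ‖y - p s‖ := fun s hs y hy =>
    dist_eq_norm y (p s) ▸ hsep y hy (p s) (mem_image_of_mem p hs)
  have hfar_ioc : ∀ s ∈ uIoc c d, ∀ y ∈ Metric.ball x r, r ≤ ‖y - p s‖ :=
    fun s hs => hfar s (uIoc_subset_uIcc hs)
  refine intervalIntegral.hasFDerivAt_integral_of_dominated_of_fderiv_le
    (F' := fun y s => -(‖y - p s‖ ^ 3)⁻¹ • innerSL ℝ (y - p s)) (bound := fun _ => (r ^ 2)⁻¹)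
    (Metric.ball_mem_nhds x hr) ?_ ?_
    (continuousOn_fderiv_inv_norm_sub hp hx).intervalIntegrable.def'.aestronglyMeasurable
    ?_ intervalIntegrable_const ?_
  · exact .of_forall fun y =>
      (continuous_const.sub hp).norm.measurable.inv.aestronglyMeasurable
  · refine ((continuous_const.sub hp).norm.continuousOn.inv₀ fun s hs => ?_).intervalIntegrable
    exact (hr.trans_le (hfar s hs x (Metric.mem_ball_self hr))).ne'
  · refine .of_forall fun s hs y hy => ?_
    rw [norm_fderiv_inv_norm]
    gcongr
    exact hfar_ioc s hs y hy
  · refine .of_forall fun s hs y hy => ?_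
    have hne : y - p s ≠ 0 := norm_pos_iff.1 (hr.trans_le (hfar_ioc s hs y hy))
    have h := (hasFDerivAt_inv_norm hne).comp y ((hasFDerivAt_id y).sub_const (p s))
    rwa [ContinuousLinearMap.comp_id] at h

theorem intervalIntegral_fderiv_inv_norm_sub_line_apply {a τ : E}
    (hx : x ∉ (fun s : ℝ => a + s • τ) '' uIcc c d) :
    (∫ s in c..d, -(‖x - (a + s • τ)‖ ^ 3)⁻¹ • innerSL ℝ (x - (a + s • τ))) τ
      = ‖x - (a + c • τ)‖⁻¹ - ‖x - (a + d • τ)‖⁻¹ := by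
  have hcont := continuousOn_fderiv_inv_norm_sub (by fun_prop) hx
  rw [ContinuousLinearMap.intervalIntegral_apply hcont.intervalIntegrable]
  have hderiv : ∀ s ∈ uIcc c d, HasDerivAt (fun s => -‖x - (a + s • τ)‖⁻¹)
      ((-(‖x - (a + s • τ)‖ ^ 3)⁻¹ • innerSL ℝ (x - (a + s • τ))) τ) s := by
    intro s hs
    have hne : x - (a + s • τ) ≠ 0 := fun h => hx ⟨s, hs, (sub_eq_zero.1 h).symm⟩
    have hline : HasDerivAt (fun s : ℝ => x - (a + s • τ)) (-τ) s := by
      simpa using (((hasDerivAt_id s).smul_const τ).const_add a).const_sub x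
    have h := ((hasFDerivAt_inv_norm hne).comp_hasDerivAt s hline).neg
    simp only [map_neg, neg_neg] at h
    exact h
  rw [intervalIntegral.integral_eq_sub_of_hasDerivAt hderiv
    (hcont.clm_apply continuousOn_const).intervalIntegrable]
  ring

end CurvePotential

theorem directional_derivative_of_segment_potential
    (a b : EuclideanSpace ℝ (Fin 3)) (hab : a ≠ b)
    (L : ℝ) (hL : L = ‖b - a‖)
    (τ : EuclideanSpace ℝ (Fin 3)) (hτ : τ = L⁻¹ • (b - a))
    (G : EuclideanSpace ℝ (Fin 3) → ℝ)
    (hG : ∀ y, G y = ∫ s in (0:ℝ)..L, 1 / (4 * Real.pi * ‖y - (a + s • τ)‖))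
    (x : EuclideanSpace ℝ (Fin 3)) (hx : x ∉ segment ℝ a b) :
    DifferentiableAt ℝ G x ∧
    fderiv ℝ G x τ = (1 / (4 * Real.pi)) * (1 / ‖x - a‖ - 1 / ‖x - b‖) := by
  have hL0 : L ≠ 0 := hL ▸ norm_ne_zero_iff.2 (sub_ne_zero.2 hab.symm)
  have hb : a + L • τ = b := by
    rw [hτ, smul_smul, mul_inv_cancel₀ hL0, one_smul, add_sub_cancel]
  have hline : (fun s : ℝ => a + s • τ) '' uIcc 0 L = segment ℝ a b := by
    have hmap : (fun s : ℝ => a + s • τ) = AffineMap.lineMap a (a + τ) := by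
      ext s; simp [AffineMap.lineMap_apply_module', add_comm]
    rw [hmap, ← segment_eq_uIcc, image_segment]
    simp [AffineMap.lineMap_apply_module', ← hb, add_comm]
  have hG' : G = fun y => (4 * π)⁻¹ * ∫ s in (0:ℝ)..L, ‖y - (a + s • τ)‖⁻¹ := by
    ext y
    rw [hG, ← intervalIntegral.integral_const_mul]
    simp_rw [one_div, mul_inv]
  have hderiv := (hasFDerivAt_intervalIntegral_inv_norm_sub (by fun_prop)
    (hline ▸ hx)).const_mul (4 * π)⁻¹
  rw [hG']
  refine ⟨hderiv.differentiableAt, ?_⟩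
  rw [hderiv.fderiv, smul_apply,
    intervalIntegral_fderiv_inv_norm_sub_line_apply (hline ▸ hx), hb]
  simp [one_div]
end

section
/- Let a, b ∈ ℝ³ with a ≠ b, L = ‖b − a‖, τ = (b − a)/L, and let Λ = {a + sτ : 0 ≤ s ≤ L} denote the closed segment. For every continuous function φ : ℝ³ → ℝ, lim_{ε → 0⁺} (1/(π ε²)) ∫_{{x : dist(x, Λ) ≤ ε}} φ(x) dx = ∫₀^L φ(a + sτ) ds. -/
open MeasureTheory Real Filter Metric Set

noncomputable section

namespace TubeAux

abbrev E3 := EuclideanSpace ℝ (Fin 3)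

/-- canonical segment along first coordinate -/
def seg (L : ℝ) : Set E3 := (fun s : ℝ => EuclideanSpace.single (0 : Fin 3) s) '' Set.Icc 0 L

def P : (ℝ × (Fin 2 → ℝ)) ≃ᵐ E3 :=
  ((MeasurableEquiv.piFinSuccAbove (fun _ : Fin 3 => ℝ) 0).symm.trans
    (MeasurableEquiv.toLp 2 (Fin 3 → ℝ)))

lemma volP : MeasurePreserving (⇑P) volume volume :=
  (MeasurePreserving.symm _ (EuclideanSpace.volume_preserving_symm_measurableEquiv_toLp (Fin 3))).comp
    (MeasurePreserving.symm _ (volume_preserving_piFinSuccAbove (fun _ : Fin 3 => ℝ) 0))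

lemma P_apply (p : ℝ × (Fin 2 → ℝ)) (i : Fin 3) : P p i = (Fin.cons p.1 p.2 : Fin 3 → ℝ) i := by
  show Fin.insertNth (α := fun _ : Fin 3 => ℝ) 0 p.1 p.2 i = _
  rw [Fin.insertNth_zero']

lemma P_apply0 (p : ℝ × (Fin 2 → ℝ)) : P p 0 = p.1 := by rw [P_apply]; rfl
lemma P_apply1 (p : ℝ × (Fin 2 → ℝ)) : P p 1 = p.2 0 := by rw [P_apply]; rfl
lemma P_apply2 (p : ℝ × (Fin 2 → ℝ)) : P p 2 = p.2 1 := by rw [P_apply]; rfl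

lemma P_cont : Continuous (⇑P) := by
  have : ⇑P = fun p : ℝ × (Fin 2 → ℝ) =>
      (WithLp.equiv 2 (Fin 3 → ℝ)).symm (Fin.insertNth 0 p.1 p.2) := by
    funext p; rfl
  rw [this]
  refine (PiLp.continuous_toLp 2 (fun _ : Fin 3 => ℝ)).comp ?_
  refine continuous_pi fun i => ?_
  simp only [Fin.insertNth_zero']
  refine Fin.cases ?_ (fun j => ?_) i
  · simpa using continuous_fst
  · simpa [Function.comp_def] using (continuous_apply j).comp continuous_snd

lemma dist_eq3 (x y : E3) :
    dist x y = Real.sqrt ((x 0 - y 0)^2 + ((x 1 - y 1)^2 + (x 2 - y 2)^2)) := by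
  rw [EuclideanSpace.dist_eq]
  congr 1
  simp [Fin.sum_univ_three, Real.dist_eq, sq_abs, add_assoc]

lemma dist_le3 (x y : E3) {r : ℝ} (hr : 0 ≤ r) :
    dist x y ≤ r ↔ (x 0 - y 0)^2 + ((x 1 - y 1)^2 + (x 2 - y 2)^2) ≤ r^2 := by
  rw [dist_eq3, Real.sqrt_le_left hr]

end TubeAux

namespace TubeAux

/-- the disk of radius ε in the cross-section -/
def D (ε : ℝ) : Set (Fin 2 → ℝ) := {y | (y 0)^2 + (y 1)^2 ≤ ε^2}

lemma D_closed (ε : ℝ) : IsClosed (D ε) := by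
  have : Continuous fun y : Fin 2 → ℝ => (y 0)^2 + (y 1)^2 := by continuity
  exact isClosed_le this continuous_const

lemma D_meas (ε : ℝ) : MeasurableSet (D ε) := (D_closed ε).measurableSet

lemma D_preimage (ε : ℝ) (hε : 0 ≤ ε) :
    (MeasurableEquiv.toLp 2 (Fin 2 → ℝ)).symm ⁻¹' (D ε) = Metric.closedBall 0 ε := by
  ext x
  have hx : (MeasurableEquiv.toLp 2 (Fin 2 → ℝ)).symm x = (WithLp.equiv 2 (Fin 2 → ℝ)) x := rfl
  simp only [Set.mem_preimage, D, Set.mem_setOf_eq, Metric.mem_closedBall, dist_zero_right, hx]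
  rw [EuclideanSpace.norm_eq, Real.sqrt_le_left hε, Fin.sum_univ_two]
  simp [sq_abs]

lemma D_vol (ε : ℝ) (hε : 0 ≤ ε) : volume (D ε) = ENNReal.ofReal (π * ε^2) := by
  rw [← (EuclideanSpace.volume_preserving_symm_measurableEquiv_toLp (Fin 2)).measure_preimage
      (D_meas ε).nullMeasurableSet, D_preimage ε hε, EuclideanSpace.volume_closedBall]
  have h2 : (Fintype.card (Fin 2) : ℝ) / 2 + 1 = 2 := by
    simp [Fintype.card_fin]; norm_num
  rw [h2]
  simp only [Fintype.card_fin, Real.Gamma_two]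
  rw [← ENNReal.ofReal_pow hε, ← ENNReal.ofReal_mul (by positivity)]
  congr 1
  rw [Real.sq_sqrt pi_nonneg]
  ring

lemma isometry_single : Isometry (fun s : ℝ => EuclideanSpace.single (0 : Fin 3) s) :=
  Isometry.of_dist_eq fun a b => EuclideanSpace.dist_single_same 0 a b

lemma seg_compact (L : ℝ) : IsCompact (seg L) :=
  (isCompact_Icc).image isometry_single.continuous

lemma seg_nonempty (L : ℝ) (hL : 0 ≤ L) : (seg L).Nonempty :=
  ⟨_, Set.mem_image_of_mem _ (Set.left_mem_Icc.2 hL)⟩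

lemma P_single (s : ℝ) : P (s, (0 : Fin 2 → ℝ)) = EuclideanSpace.single (0 : Fin 3) s := by
  ext i
  rw [P_apply]
  refine Fin.cases ?_ (fun j => ?_) i
  · simp [EuclideanSpace.single_apply]
  · simp [EuclideanSpace.single_apply, Fin.succ_ne_zero]

end TubeAux

namespace TubeAux

def tube (L ε : ℝ) : Set E3 := {x | Metric.infDist x (seg L) ≤ ε}

lemma tube_closed (L ε : ℝ) : IsClosed (tube L ε) :=
  isClosed_le (Metric.continuous_infDist_pt _) continuous_const

lemma tube_meas (L ε : ℝ) : MeasurableSet (tube L ε) := (tube_closed L ε).measurableSet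

lemma tube_mono (L : ℝ) {ε ε' : ℝ} (h : ε ≤ ε') : tube L ε ⊆ tube L ε' :=
  fun _ hx => le_trans hx h

lemma B_subset_tube (L : ℝ) {ε : ℝ} (hε : 0 ≤ ε) {p : ℝ × (Fin 2 → ℝ)}
    (hp : p ∈ Set.Icc (0:ℝ) L ×ˢ D ε) : P p ∈ tube L ε := by
  obtain ⟨hp1, hp2⟩ := hp
  have hmem : EuclideanSpace.single (0 : Fin 3) p.1 ∈ seg L := Set.mem_image_of_mem _ hp1
  refine le_trans (Metric.infDist_le_dist_of_mem hmem) ?_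
  rw [← P_single, dist_le3 _ _ hε]
  simp only [P_apply0, P_apply1, P_apply2]
  have := hp2
  simp only [D, Set.mem_setOf_eq] at this
  simpa using this

lemma tube_subset_B (L : ℝ) (hL : 0 ≤ L) {ε : ℝ} (hε : 0 ≤ ε) {p : ℝ × (Fin 2 → ℝ)}
    (hp : P p ∈ tube L ε) : p ∈ Set.Icc (-ε) (L + ε) ×ˢ D ε := by
  obtain ⟨z, hz, hdz⟩ := (seg_compact L).exists_infDist_eq_dist (seg_nonempty L hL) (P p)
  obtain ⟨s, hs, rfl⟩ := hz
  have hdist : dist (P p) (EuclideanSpace.single (0 : Fin 3) s) ≤ ε := by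
    rw [← hdz]; exact hp
  rw [← P_single, dist_le3 _ _ hε] at hdist
  simp only [P_apply0, P_apply1, P_apply2, Pi.zero_apply, sub_zero] at hdist
  obtain ⟨hs0, hsL⟩ := hs
  have hsq : (p.1 - s)^2 ≤ ε^2 := by nlinarith [sq_nonneg (p.2 0), sq_nonneg (p.2 1)]
  have habs : |p.1 - s| ≤ ε := by
    have := Real.sqrt_le_sqrt hsq
    rwa [Real.sqrt_sq_eq_abs, Real.sqrt_sq hε] at this
  rw [abs_le] at habs
  constructor
  · constructor <;> [linarith [habs.1]; linarith [habs.2]]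
  · show (p.2 0)^2 + (p.2 1)^2 ≤ ε^2
    nlinarith [sq_nonneg (p.1 - s)]

lemma tube_compact (L : ℝ) (hL : 0 ≤ L) : IsCompact (tube L 1) := by
  refine IsCompact.of_isClosed_subset (isCompact_closedBall (0 : E3) (1 + L))
    (tube_closed L 1) ?_
  intro x hx
  obtain ⟨z, hz, hdz⟩ := (seg_compact L).exists_infDist_eq_dist (seg_nonempty L hL) x
  obtain ⟨s, hs, rfl⟩ := hz
  have h1 : dist x (EuclideanSpace.single (0 : Fin 3) s) ≤ 1 := by rw [← hdz]; exact hx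
  have h2 : ‖EuclideanSpace.single (0 : Fin 3) s‖ = |s| := by
    rw [EuclideanSpace.norm_single]; exact Real.norm_eq_abs s
  rw [Metric.mem_closedBall]
  calc dist x 0 ≤ dist x (EuclideanSpace.single (0 : Fin 3) s)
        + dist (EuclideanSpace.single (0 : Fin 3) s) 0 := dist_triangle _ _ _
    _ ≤ 1 + L := by
        refine add_le_add h1 ?_
        rw [dist_zero_right, h2, abs_of_nonneg hs.1]
        exact hs.2

end TubeAux

namespace TubeAux

lemma zero_mem_D {ε : ℝ} (hε : 0 ≤ ε) : (0 : Fin 2 → ℝ) ∈ D ε := by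
  simp only [D, Set.mem_setOf_eq, Pi.zero_apply]
  nlinarith [sq_nonneg ε]

lemma D_compact {ε : ℝ} (hε : 0 ≤ ε) : IsCompact (D ε) := by
  refine IsCompact.of_isClosed_subset (isCompact_closedBall (0 : Fin 2 → ℝ) ε)
    (D_closed ε) ?_
  intro y hy
  simp only [Metric.mem_closedBall, dist_zero_right]
  rw [pi_norm_le_iff_of_nonneg hε]
  intro i
  have h0 := hy
  simp only [D, Set.mem_setOf_eq] at h0
  have h2 : (y i)^2 ≤ ε^2 := by
    fin_cases i
    · show (y 0)^2 ≤ ε^2; nlinarith [sq_nonneg (y 1)]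
    · show (y 1)^2 ≤ ε^2; nlinarith [sq_nonneg (y 0)]
  have := Real.sqrt_le_sqrt h2
  rwa [Real.sqrt_sq_eq_abs, Real.sqrt_sq hε, ← Real.norm_eq_abs] at this

lemma tube_integral_estimate (L : ℝ) (hL : 0 < L) (ψ : E3 → ℝ)
    (hψ : Continuous ψ)
    (M : ℝ) (hM : ∀ x ∈ tube L 1, ‖ψ x‖ ≤ M)
    (η δ' : ℝ)
    (hδ' : ∀ u ∈ tube L 1, ∀ v ∈ tube L 1, dist u v < δ' → dist (ψ u) (ψ v) < η)
    (ε : ℝ) (hε : 0 < ε) (hε1 : ε ≤ 1) (hεδ : ε < δ') :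
    |(∫ x in tube L ε, ψ x) -
        (π * ε^2) * ∫ s in (0:ℝ)..L, ψ (EuclideanSpace.single 0 s)|
      ≤ π * ε^2 * (L * η + 2 * M * ε) := by
  set A : Set (ℝ × (Fin 2 → ℝ)) := ⇑P ⁻¹' tube L ε with hA
  set B : Set (ℝ × (Fin 2 → ℝ)) := Set.Icc (0:ℝ) L ×ˢ D ε with hB
  set Bout : Set (ℝ × (Fin 2 → ℝ)) := Set.Icc (-ε) (L + ε) ×ˢ D ε with hBout
  have hBA : B ⊆ A := fun p hp => B_subset_tube L hε.le hp
  have hABout : A ⊆ Bout := fun p hp => tube_subset_B L hL.le hε.le hp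
  have hAmeas : MeasurableSet A := P.measurable (tube_meas L ε)
  have hBmeas : MeasurableSet B := measurableSet_Icc.prod (D_meas ε)
  -- compactness
  have hDcomp := D_compact hε.le
  have hBcomp : IsCompact B := isCompact_Icc.prod hDcomp
  have hBoutcomp : IsCompact Bout := isCompact_Icc.prod hDcomp
  have hAclosed : IsClosed A := (tube_closed L ε).preimage P_cont
  have hAcomp : IsCompact A := IsCompact.of_isClosed_subset hBoutcomp hAclosed hABout
  have hcont : Continuous fun p : ℝ × (Fin 2 → ℝ) => ψ (P p) := hψ.comp P_cont
  have hcont0 : Continuous fun p : ℝ × (Fin 2 → ℝ) => ψ (P (p.1, 0)) :=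
    hψ.comp (P_cont.comp (continuous_fst.prodMk continuous_const))
  have hInt_A : IntegrableOn (fun p => ψ (P p)) A := hcont.continuousOn.integrableOn_compact hAcomp
  have hInt_B : IntegrableOn (fun p => ψ (P p)) B := hInt_A.mono_set hBA
  have hInt_B0 : IntegrableOn (fun p : ℝ × (Fin 2 → ℝ) => ψ (P (p.1, 0))) B :=
    hcont0.continuousOn.integrableOn_compact hBcomp
  have hInt_diff : IntegrableOn (fun p => ψ (P p)) (A \ B) := hInt_A.mono_set Set.diff_subset
  -- volumes
  have hπε : (0:ℝ) ≤ π * ε^2 := by positivity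
  have hvolB : volume B = ENNReal.ofReal (L * (π * ε^2)) := by
    rw [hB, Measure.volume_eq_prod, Measure.prod_prod, Real.volume_Icc, D_vol ε hε.le,
      sub_zero, ← ENNReal.ofReal_mul hL.le]
  have hvolBout : volume Bout = ENNReal.ofReal ((L + 2*ε) * (π * ε^2)) := by
    rw [hBout, Measure.volume_eq_prod, Measure.prod_prod, Real.volume_Icc, D_vol ε hε.le,
      ← ENNReal.ofReal_mul (by linarith)]
    congr 2
    ring
  have hvolBfin : volume B ≠ ⊤ := by rw [hvolB]; exact ENNReal.ofReal_ne_top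
  have hvolBtoReal : (volume B).toReal = L * (π * ε^2) := by
    rw [hvolB, ENNReal.toReal_ofReal (by positivity)]
  have hvoldiff : (volume (A \ B)).toReal ≤ 2 * ε * (π * ε^2) := by
    have hd1 : volume (A \ B) = volume A - volume B :=
      measure_diff hBA hBmeas.nullMeasurableSet hvolBfin
    have hsub : volume (A \ B) ≤ ENNReal.ofReal ((L + 2*ε) * (π * ε^2) - L * (π * ε^2)) := by
      rw [hd1, ENNReal.ofReal_sub _ (by positivity), ← hvolB, ← hvolBout]
      exact tsub_le_tsub_right (measure_mono hABout) _
    have h2 := ENNReal.toReal_mono ENNReal.ofReal_ne_top hsub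
    rw [ENNReal.toReal_ofReal (by nlinarith)] at h2
    nlinarith [h2]
  have hvoldifffin : volume (A \ B) < ⊤ :=
    lt_of_le_of_lt (measure_mono Set.diff_subset) hAcomp.measure_lt_top
  have hM0 : 0 ≤ M := by
    have hmem : EuclideanSpace.single (0 : Fin 3) (0:ℝ) ∈ tube L 1 := by
      have : EuclideanSpace.single (0 : Fin 3) (0:ℝ) ∈ seg L :=
        Set.mem_image_of_mem _ (Set.left_mem_Icc.2 hL.le)
      have h0 : Metric.infDist (EuclideanSpace.single (0 : Fin 3) (0:ℝ)) (seg L) = 0 :=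
        Metric.infDist_zero_of_mem this
      show Metric.infDist _ (seg L) ≤ 1
      rw [h0]; norm_num
    exact le_trans (norm_nonneg _) (hM _ hmem)
  -- transfer and split
  have h1 : ∫ x in tube L ε, ψ x = ∫ p in A, ψ (P p) :=
    (volP.setIntegral_preimage_emb P.measurableEmbedding ψ _).symm
  have hunion : B ∪ (A \ B) = A := Set.union_diff_cancel hBA
  have hsplit : ∫ p in A, ψ (P p) = (∫ p in B, ψ (P p)) + ∫ p in A \ B, ψ (P p) := by
    conv_lhs => rw [← hunion]
    exact setIntegral_union Set.disjoint_sdiff_right (hAmeas.diff hBmeas) hInt_B hInt_diff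
  -- Fubini for the comparison function
  have hDtoReal : (volume (D ε)).toReal = π * ε^2 := by
    rw [D_vol ε hε.le, ENNReal.toReal_ofReal hπε]
  have hfub0 : ∫ p in B, ψ (P (p.1, 0)) = (π * ε^2) * ∫ t in Set.Icc (0:ℝ) L, ψ (P (t, 0)) := by
    rw [hB, Measure.volume_eq_prod,
      setIntegral_prod _ (by rw [← Measure.volume_eq_prod, ← hB]; exact hInt_B0)]
    simp_rw [MeasureTheory.setIntegral_const, Measure.real, hDtoReal, smul_eq_mul]
    rw [MeasureTheory.integral_const_mul]
  -- pointwise bound on B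
  have hdiffbound : ∀ p ∈ B, ‖ψ (P p) - ψ (P (p.1, 0))‖ ≤ η := by
    intro p hp
    obtain ⟨hp1, hp2⟩ := hp
    have hq1 : P p ∈ tube L 1 := tube_mono L hε1 (B_subset_tube L hε.le ⟨hp1, hp2⟩)
    have hp0B : (p.1, (0:Fin 2 → ℝ)) ∈ B := ⟨hp1, zero_mem_D hε.le⟩
    have hq2 : P (p.1, 0) ∈ tube L 1 := tube_mono L hε1 (B_subset_tube L hε.le hp0B)
    have hD2 : (p.2 0)^2 + (p.2 1)^2 ≤ ε^2 := hp2
    have hd : dist (P p) (P (p.1, 0)) ≤ ε := by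
      rw [dist_le3 _ _ hε.le]
      simp only [P_apply0, P_apply1, P_apply2, Pi.zero_apply, sub_self, sub_zero]
      nlinarith [hD2]
    have := hδ' _ hq1 _ hq2 (lt_of_le_of_lt hd hεδ)
    rw [Real.dist_eq] at this
    rw [Real.norm_eq_abs]
    exact le_of_lt this
  have herr1 : ‖∫ p in B, (ψ (P p) - ψ (P (p.1, 0)))‖ ≤ η * (L * (π * ε^2)) := by
    have := norm_setIntegral_le_of_norm_le_const (μ := volume)
      (lt_top_iff_ne_top.mpr hvolBfin) hdiffbound
    rwa [Measure.real, hvolBtoReal] at this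
  have herr2 : ‖∫ p in A \ B, ψ (P p)‖ ≤ M * (2 * ε * (π * ε^2)) := by
    have hb : ∀ p ∈ A \ B, ‖ψ (P p)‖ ≤ M := fun p hp => hM _ (tube_mono L hε1 hp.1)
    refine le_trans (norm_setIntegral_le_of_norm_le_const (μ := volume)
      hvoldifffin hb) ?_
    exact mul_le_mul_of_nonneg_left hvoldiff hM0
  have hI : ∫ t in Set.Icc (0:ℝ) L, ψ (P (t, 0))
      = ∫ s in (0:ℝ)..L, ψ (EuclideanSpace.single 0 s) := by
    simp_rw [P_single]
    rw [MeasureTheory.integral_Icc_eq_integral_Ioc, ← intervalIntegral.integral_of_le hL.le]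
  have key : (∫ x in tube L ε, ψ x) -
      (π * ε^2) * ∫ s in (0:ℝ)..L, ψ (EuclideanSpace.single 0 s)
      = (∫ p in B, (ψ (P p) - ψ (P (p.1, 0)))) + ∫ p in A \ B, ψ (P p) := by
    rw [h1, hsplit, integral_sub hInt_B hInt_B0, ← hI, ← hfub0]
    ring
  rw [key]
  calc |(∫ p in B, (ψ (P p) - ψ (P (p.1, 0)))) + ∫ p in A \ B, ψ (P p)|
      ≤ |∫ p in B, (ψ (P p) - ψ (P (p.1, 0)))| + |∫ p in A \ B, ψ (P p)| := abs_add_le _ _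
    _ ≤ η * (L * (π * ε^2)) + M * (2 * ε * (π * ε^2)) := by
        refine add_le_add ?_ ?_
        · rw [← Real.norm_eq_abs]; exact herr1
        · rw [← Real.norm_eq_abs]; exact herr2
    _ = π * ε^2 * (L * η + 2 * M * ε) := by ring

end TubeAux

namespace TubeAux

lemma tube_limit_canonical (L : ℝ) (hL : 0 < L) (ψ : E3 → ℝ) (hψ : Continuous ψ) :
    Tendsto (fun ε : ℝ => (1 / (π * ε ^ 2)) * ∫ x in tube L ε, ψ x)
      (nhdsWithin 0 (Set.Ioi 0))
      (nhds (∫ s in (0:ℝ)..L, ψ (EuclideanSpace.single 0 s))) := by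
  obtain ⟨M₀, hM₀⟩ := (tube_compact L hL.le).exists_bound_of_continuousOn hψ.continuousOn
  set M := max M₀ 0 with hMdef
  have hM : ∀ x ∈ tube L 1, ‖ψ x‖ ≤ M := fun x hx => le_trans (hM₀ x hx) (le_max_left _ _)
  have hM0 : 0 ≤ M := le_max_right _ _
  have huc : UniformContinuousOn ψ (tube L 1) :=
    (tube_compact L hL.le).uniformContinuousOn_of_continuous hψ.continuousOn
  rw [Metric.tendsto_nhdsWithin_nhds]
  intro η hη
  set η₁ := η / (2 * (L + 1)) with hη₁def
  have hη₁ : 0 < η₁ := by positivity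
  obtain ⟨δ', hδ'pos, hδ'⟩ := (Metric.uniformContinuousOn_iff).mp huc η₁ hη₁
  refine ⟨min (min δ' 1) (η / (2 * (2 * M + 1))), by positivity, ?_⟩
  intro ε hεIoi hdist
  have hε : 0 < ε := hεIoi
  rw [Real.dist_eq, sub_zero, abs_of_pos hε] at hdist
  have hεδ : ε < δ' := lt_of_lt_of_le hdist (le_trans (min_le_left _ _) (min_le_left _ _))
  have hε1 : ε ≤ 1 := le_of_lt (lt_of_lt_of_le hdist (le_trans (min_le_left _ _) (min_le_right _ _)))
  have hεη : ε < η / (2 * (2 * M + 1)) := lt_of_lt_of_le hdist (min_le_right _ _)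
  have est := tube_integral_estimate L hL ψ hψ M hM η₁ δ'
    (fun u hu v hv huv => hδ' u hu v hv huv) ε hε hε1 hεδ
  have hπε : (0:ℝ) < π * ε ^ 2 := by positivity
  set I := ∫ s in (0:ℝ)..L, ψ (EuclideanSpace.single 0 s) with hI
  rw [Real.dist_eq]
  have hsplit : (1 / (π * ε ^ 2)) * (∫ x in tube L ε, ψ x) - I
      = (1 / (π * ε ^ 2)) * ((∫ x in tube L ε, ψ x) - (π * ε ^ 2) * I) := by
    field_simp
  rw [hsplit, abs_mul, abs_of_pos (by positivity : (0:ℝ) < 1 / (π * ε ^ 2))]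
  have hle : (1 / (π * ε ^ 2)) * |(∫ x in tube L ε, ψ x) - (π * ε ^ 2) * I|
      ≤ (1 / (π * ε ^ 2)) * (π * ε ^ 2 * (L * η₁ + 2 * M * ε)) :=
    mul_le_mul_of_nonneg_left est (by positivity)
  have heq : (1 / (π * ε ^ 2)) * (π * ε ^ 2 * (L * η₁ + 2 * M * ε)) = L * η₁ + 2 * M * ε := by
    field_simp
  rw [heq] at hle
  refine lt_of_le_of_lt hle ?_
  have h4 : L * η₁ < η / 2 := by
    rw [hη₁def, mul_div_assoc', div_lt_div_iff₀ (by linarith) two_pos]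
    nlinarith
  have h5 : 2 * M * ε < η / 2 := by
    rw [lt_div_iff₀ (by positivity : (0:ℝ) < 2 * (2 * M + 1))] at hεη
    nlinarith
  linarith

end TubeAux

open TubeAux in
theorem nascent_dirac_tube_weak_limit
    (a b : EuclideanSpace ℝ (Fin 3)) (hab : a ≠ b)
    (L : ℝ) (hL : L = ‖b - a‖)
    (τ : EuclideanSpace ℝ (Fin 3)) (hτ : τ = L⁻¹ • (b - a))
    (φ : EuclideanSpace ℝ (Fin 3) → ℝ) (hφ : Continuous φ) :
    Tendsto
      (fun ε : ℝ => (1 / (Real.pi * ε ^ 2)) *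
        ∫ x in {x : EuclideanSpace ℝ (Fin 3) | Metric.infDist x (segment ℝ a b) ≤ ε}, φ x)
      (nhdsWithin 0 (Set.Ioi 0))
      (nhds (∫ s in (0:ℝ)..L, φ (a + s • τ))) := by
  have hLpos : 0 < L := by
    rw [hL, norm_pos_iff, sub_ne_zero]
    exact fun h => hab h.symm
  have hLne : L ≠ 0 := ne_of_gt hLpos
  have hτnorm : ‖τ‖ = 1 := by
    rw [hτ, norm_smul, norm_inv, Real.norm_eq_abs, abs_of_pos hLpos, ← hL,
      inv_mul_cancel₀ hLne]
  have hLτ : L • τ = b - a := by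
    rw [hτ, smul_smul, mul_inv_cancel₀ hLne, one_smul]
  -- orthonormal basis with first vector τ
  have hON : Orthonormal ℝ (({0} : Set (Fin 3)).restrict (fun _ : Fin 3 => τ)) := by
    refine ⟨fun i => hτnorm, fun i j hij => absurd ?_ hij⟩
    ext
    have hi := i.2
    have hj := j.2
    simp only [Set.mem_singleton_iff] at hi hj
    rw [hi, hj]
  obtain ⟨bb, hbb⟩ := Orthonormal.exists_orthonormalBasis_extension_of_card_eq
    (𝕜 := ℝ) (by simp [finrank_euclideanSpace]) hON
  have hbb0 : bb 0 = τ := hbb 0 rfl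
  -- the affine isometry
  set T : EuclideanSpace ℝ (Fin 3) → EuclideanSpace ℝ (Fin 3) :=
    fun u => a + bb.repr.symm u with hT
  have hTmp : MeasurePreserving T volume volume :=
    MeasurePreserving.add_left volume a bb.measurePreserving_repr_symm
  have hTeq : T = ⇑((bb.repr.symm.toHomeomorph.toMeasurableEquiv).trans
      (MeasurableEquiv.addLeft a)) := rfl
  have hTemb : MeasurableEmbedding T := by
    rw [hTeq]; exact MeasurableEquiv.measurableEmbedding _
  have hTiso : Isometry T := by
    refine Isometry.of_dist_eq fun u v => ?_
    rw [hT]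
    simp only [dist_add_left]
    exact bb.repr.symm.isometry.dist_eq u v
  have hTsingle : ∀ s : ℝ, T (EuclideanSpace.single (0 : Fin 3) s) = a + s • τ := by
    intro s
    have h1 : EuclideanSpace.single (0 : Fin 3) s
        = s • EuclideanSpace.single (0 : Fin 3) (1:ℝ) := by
      ext j
      have h2 : (s • EuclideanSpace.single (0:Fin 3) (1:ℝ)) j
          = s * (EuclideanSpace.single (0:Fin 3) (1:ℝ)) j := rfl
      rw [h2, EuclideanSpace.single_apply, EuclideanSpace.single_apply]
      split <;> simp
    show a + bb.repr.symm (EuclideanSpace.single (0 : Fin 3) s) = a + s • τ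
    rw [h1, LinearIsometryEquiv.map_smul, bb.repr_symm_single, hbb0]
  -- image of the canonical segment
  have himg : T '' (seg L) = segment ℝ a b := by
    rw [seg, Set.image_image, segment_eq_image' ℝ a b]
    ext z
    simp only [Set.mem_image]
    constructor
    · rintro ⟨s, hs, rfl⟩
      refine ⟨s / L, ⟨div_nonneg hs.1 hLpos.le, by rw [div_le_one hLpos]; exact hs.2⟩, ?_⟩
      rw [hTsingle, ← hLτ, smul_smul, div_mul_cancel₀ s hLne]
    · rintro ⟨θ, hθ, rfl⟩
      refine ⟨θ * L, ⟨mul_nonneg hθ.1 hLpos.le, by nlinarith [hθ.2]⟩, ?_⟩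
      rw [hTsingle, ← hLτ, smul_smul]
  -- set transfer
  have hset : ∀ ε : ℝ, T ⁻¹' {x : EuclideanSpace ℝ (Fin 3) |
      Metric.infDist x (segment ℝ a b) ≤ ε} = tube L ε := by
    intro ε
    ext u
    simp only [Set.mem_preimage, Set.mem_setOf_eq, tube]
    rw [← himg, Metric.infDist_image hTiso]
  -- integral transfer
  have hint : ∀ ε : ℝ, (∫ x in {x : EuclideanSpace ℝ (Fin 3) |
      Metric.infDist x (segment ℝ a b) ≤ ε}, φ x) = ∫ u in tube L ε, φ (T u) := by
    intro ε
    rw [← hTmp.setIntegral_preimage_emb hTemb φ _, hset ε]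
  have htarget : (∫ s in (0:ℝ)..L, φ (a + s • τ))
      = ∫ s in (0:ℝ)..L, φ (T (EuclideanSpace.single 0 s)) := by
    refine intervalIntegral.integral_congr fun s _ => ?_
    rw [hTsingle]
  rw [htarget]
  have := tube_limit_canonical L hLpos (fun u => φ (T u)) (hφ.comp hTiso.continuous)
  refine this.congr fun ε => ?_
  rw [hint ε]
end
end

section
/- Let a, b ∈ ℝ³ with a ≠ b, L = ‖b−a‖, τ = (b−a)/L, let Λ = {a + sτ : 0 ≤ s ≤ L}, r(x) = dist(x, Λ), and define G(x) = ∫₀^L 1/(4π ‖x − (a + sτ)‖) ds. Then G is differentiable at every point of ℝ³ \ Λ, and for every bounded measurable Ω ⊂ ℝ³ and every α > 0 the gradient satisfies ∫_Ω r(x)^{2α} ‖∇G(x)‖² dx < ∞, i.e. ∇G ∈ (L²_α(Ω))³. -/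
open MeasureTheory Real Set Metric

set_option maxHeartbeats 1000000
set_option synthInstance.maxHeartbeats 400000

noncomputable section

local notation "E3" => EuclideanSpace ℝ (Fin 3)

lemma segPot_kernel_hasFDerivAt (c x : E3) (h : x ≠ c) :
    HasFDerivAt (fun y : E3 => 1 / (4 * π * ‖y - c‖))
      ((-(4 * π * ‖x - c‖ ^ 3)⁻¹) • (innerSL ℝ (x - c))) x := by
  have hv : x - c ≠ 0 := sub_ne_zero_of_ne h
  have hn : 0 < ‖x - c‖ := norm_pos_iff.mpr hv
  have hsq : HasFDerivAt (fun y : E3 => ‖y - c‖ ^ 2)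
      (2 • ((innerSL ℝ (x - c)).comp (ContinuousLinearMap.id ℝ E3))) x := by
    have : HasFDerivAt (fun y : E3 => y - c) (ContinuousLinearMap.id ℝ E3) x :=
      (hasFDerivAt_id x).sub_const c
    exact this.norm_sq
  have hsqrt : HasFDerivAt (fun y : E3 => Real.sqrt (‖y - c‖ ^ 2))
      ((1 / (2 * Real.sqrt (‖x - c‖ ^ 2))) •
        (2 • ((innerSL ℝ (x - c)).comp (ContinuousLinearMap.id ℝ E3)))) x :=
    hsq.sqrt (by positivity)
  have hnorm : HasFDerivAt (fun y : E3 => ‖y - c‖)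
      ((1 / (2 * Real.sqrt (‖x - c‖ ^ 2))) •
        (2 • ((innerSL ℝ (x - c)).comp (ContinuousLinearMap.id ℝ E3)))) x := by
    convert hsqrt using 2 with y
    rw [Real.sqrt_sq (norm_nonneg _)]
  have hinv : HasDerivAt (fun t : ℝ => (4 * π * t)⁻¹)
      (-(4 * π) / (4 * π * ‖x - c‖) ^ 2) ‖x - c‖ := by
    have h1 : HasDerivAt (fun t : ℝ => 4 * π * t) (4 * π) ‖x - c‖ := by
      simpa using (hasDerivAt_id ‖x - c‖).const_mul (4 * π)
    exact h1.inv (by positivity)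
  have hcomp := hinv.comp_hasFDerivAt x hnorm
  have heq : ((fun t : ℝ => (4 * π * t)⁻¹) ∘ fun y : E3 => ‖y - c‖)
      = fun y : E3 => 1 / (4 * π * ‖y - c‖) := by
    funext y; simp [Function.comp, one_div]
  rw [heq] at hcomp
  refine hcomp.congr_fderiv ?_
  ext y
  have hs : Real.sqrt (‖x - c‖ ^ 2) = ‖x - c‖ := Real.sqrt_sq (norm_nonneg _)
  simp only [ContinuousLinearMap.coe_smul', Pi.smul_apply, ContinuousLinearMap.coe_comp',
    Function.comp_apply, ContinuousLinearMap.coe_id', id_eq, ContinuousLinearMap.smul_apply,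
    smul_eq_mul, hs]
  have hπ : (0:ℝ) < π := Real.pi_pos
  field_simp
  ring

lemma segPot_kernel_norm (c x : E3) :
    ‖(-(4 * π * ‖x - c‖ ^ 3)⁻¹) • (innerSL ℝ (x - c))‖ ≤ (4 * π * ‖x - c‖ ^ 2)⁻¹ := by
  rcases eq_or_ne x c with rfl | h
  · simp
  have hn : 0 < ‖x - c‖ := norm_pos_iff.mpr (sub_ne_zero_of_ne h)
  have hπ : (0:ℝ) < π := Real.pi_pos
  rw [neg_smul, norm_neg, norm_smul, innerSL_apply_norm]
  rw [norm_inv]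
  rw [Real.norm_eq_abs, abs_of_pos (by positivity)]
  rw [le_iff_lt_or_eq]
  right
  field_simp

lemma segPot_arctan_bound {ρ : ℝ} (hρ : 0 < ρ) (s₀ A B : ℝ) :
    (∫ s in A..B, (ρ^2 + (s - s₀)^2)⁻¹) ≤ π / ρ := by
  have h1 : (∫ s in A..B, (ρ^2 + (s - s₀)^2)⁻¹)
      = ∫ u in (A - s₀)..(B - s₀), (ρ^2 + u^2)⁻¹ := by
    simpa using intervalIntegral.integral_comp_sub_right (fun u => (ρ^2 + u^2)⁻¹) s₀
  have h2 : ∀ u : ℝ, (ρ^2 + u^2)⁻¹ = (ρ^2)⁻¹ * (1 + (u/ρ)^2)⁻¹ := by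
    intro u
    rw [div_pow]
    field_simp
  have h3 : (∫ u in (A - s₀)..(B - s₀), (ρ^2 + u^2)⁻¹)
      = (ρ^2)⁻¹ * ∫ u in (A - s₀)..(B - s₀), (1 + (u/ρ)^2)⁻¹ := by
    simp_rw [h2]
    rw [intervalIntegral.integral_const_mul]
  have h4 : (∫ u in (A - s₀)..(B - s₀), (1 + (u/ρ)^2)⁻¹)
      = ρ * ((arctan ((B - s₀)/ρ)) - arctan ((A - s₀)/ρ)) := by
    rw [intervalIntegral.integral_comp_div (fun v => (1 + v^2)⁻¹) hρ.ne']
    rw [integral_inv_one_add_sq]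
    simp [smul_eq_mul]
  rw [h1, h3, h4]
  have ha1 : arctan ((B - s₀)/ρ) < π / 2 := arctan_lt_pi_div_two _
  have ha2 : -(π / 2) < arctan ((A - s₀)/ρ) := neg_pi_div_two_lt_arctan _
  rw [div_eq_mul_inv π ρ]
  have : (ρ^2)⁻¹ * (ρ * (arctan ((B - s₀)/ρ) - arctan ((A - s₀)/ρ)))
      = (arctan ((B - s₀)/ρ) - arctan ((A - s₀)/ρ)) * ρ⁻¹ := by
    field_simp
  rw [this]
  have hd : arctan ((B - s₀)/ρ) - arctan ((A - s₀)/ρ) ≤ π := by linarith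
  exact mul_le_mul_of_nonneg_right hd (by positivity)

lemma segPot_oneD {γ : ℝ} (hγ : -1 < γ) (c R : ℝ) (hR : 0 ≤ R) :
    IntegrableOn (fun t : ℝ => |t - c| ^ γ) (Icc (c - R) (c + R)) volume := by
  have h0 : IntervalIntegrable (fun t : ℝ => |t| ^ γ) volume 0 R := by
    have hb := intervalIntegral.intervalIntegrable_rpow' (a := 0) (b := R) hγ
    rw [intervalIntegrable_iff_integrableOn_Ioc_of_le hR] at hb ⊢
    exact hb.congr_fun (fun t ht => by rw [abs_of_pos ht.1]) measurableSet_Ioc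
  have hneg : IntervalIntegrable (fun t : ℝ => |t| ^ γ) volume (-R) 0 := by
    have h1 := (IntervalIntegrable.iff_comp_neg (f := fun t : ℝ => |t| ^ γ) (by simp)).mp h0
    have h2 : (fun x : ℝ => |(-x)| ^ γ) = fun x : ℝ => |x| ^ γ := by
      funext x; rw [abs_neg]
    rw [h2, neg_zero] at h1
    exact h1.symm
  have htot : IntervalIntegrable (fun t : ℝ => |t| ^ γ) volume (-R) R := hneg.trans h0
  have h2 := htot.comp_sub_right c
  have h3 : IntervalIntegrable (fun t : ℝ => |t - c| ^ γ) volume (c - R) (c + R) := by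
    have : (-R + c) = c - R := by ring
    rw [this] at h2
    have : (R + c) = c + R := by ring
    rw [this] at h2
    exact h2
  rw [intervalIntegrable_iff_integrableOn_Ioc_of_le (by linarith)] at h3
  exact (integrableOn_Icc_iff_integrableOn_Ioc).mpr h3

lemma segPot_onb (τ : E3) (hτ1 : ‖τ‖ = 1) :
    ∃ u : OrthonormalBasis (Fin 3) ℝ E3, u 0 = τ := by
  have hcard : Module.finrank ℝ E3 = Fintype.card (Fin 3) := by simp
  have hon : Orthonormal ℝ (({0} : Set (Fin 3)).restrict ![τ, 0, 0]) := by
    constructor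
    · rintro ⟨i, hi⟩
      have : i = 0 := hi
      subst this
      exact hτ1
    · intro i j hij
      exfalso
      exact hij (Subtype.ext ((i.2 : (i : Fin 3) ∈ ({0} : Set (Fin 3))).trans
        ((j.2 : (j : Fin 3) ∈ ({0} : Set (Fin 3))).symm)))
  obtain ⟨u, hu⟩ := hon.exists_orthonormalBasis_extension_of_card_eq hcard
  exact ⟨u, by simpa using hu 0 rfl⟩

lemma segPot_master (a b : E3) (hab : a ≠ b) (L : ℝ) (hL : L = ‖b - a‖)
    (τ : E3) (hτ : τ = L⁻¹ • (b - a))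
    (G : E3 → ℝ) (hG : ∀ y, G y = ∫ s in (0:ℝ)..L, 1 / (4 * π * ‖y - (a + s • τ)‖))
    {x : E3} (hx : x ∉ segment ℝ a b) :
    DifferentiableAt ℝ G x ∧
      ‖fderiv ℝ G x‖ ≤ (2 * Metric.infDist x (segment ℝ a b))⁻¹ := by
  have hπ : (0:ℝ) < π := Real.pi_pos
  have hba' : b - a ≠ 0 := sub_ne_zero_of_ne hab.symm
  have hL0 : 0 < L := by rw [hL]; exact norm_pos_iff.mpr hba'
  have hτ1 : ‖τ‖ = 1 := by
    rw [hτ, norm_smul, norm_inv, Real.norm_eq_abs, abs_of_pos hL0, ← hL]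
    field_simp
  have hba : b - a = L • τ := by
    rw [hτ, smul_smul, mul_inv_cancel₀ hL0.ne', one_smul]
  have hmem : ∀ s ∈ Icc (0:ℝ) L, a + s • τ ∈ segment ℝ a b := by
    intro s hs
    rw [segment_eq_image']
    refine ⟨s / L, ⟨div_nonneg hs.1 hL0.le, (div_le_one hL0).mpr hs.2⟩, ?_⟩
    show a + (s / L) • (b - a) = a + s • τ
    rw [hba, smul_smul, div_mul_cancel₀ _ hL0.ne']
  have hsegcl : IsClosed (segment ℝ a b) := by
    rw [segment_eq_image']
    exact (isCompact_Icc.image (by fun_prop)).isClosed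
  have hsegne : (segment ℝ a b).Nonempty := ⟨a, left_mem_segment ℝ a b⟩
  set ρ := Metric.infDist x (segment ℝ a b) with hρdef
  have hρ : 0 < ρ := (hsegcl.notMem_iff_infDist_pos hsegne).mp hx
  have hρ2 : 0 < ρ / 2 := by linarith
  -- distance lower bound on the ball
  have hdist : ∀ y ∈ ball x (ρ/2), ∀ s ∈ Icc (0:ℝ) L, ρ/2 ≤ ‖y - (a + s • τ)‖ := by
    intro y hy s hs
    have h1 : Metric.infDist x (segment ℝ a b) ≤ Metric.infDist y (segment ℝ a b) + dist x y :=
      Metric.infDist_le_infDist_add_dist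
    have h2 : dist x y < ρ / 2 := by rw [dist_comm]; exact mem_ball.mp hy
    have h3 : Metric.infDist y (segment ℝ a b) ≤ dist y (a + s • τ) :=
      Metric.infDist_le_dist_of_mem (hmem s hs)
    rw [dist_eq_norm] at h3
    linarith
  have hIoc : Set.uIoc (0:ℝ) L = Ioc 0 L := Set.uIoc_of_le hL0.le
  have hIccsub : Ioc (0:ℝ) L ⊆ Icc 0 L := Ioc_subset_Icc_self
  -- continuity of the integrand families
  have hpath : ∀ y : E3, Continuous fun s : ℝ => y - (a + s • τ) := by
    intro y; fun_prop
  have hFcont : ∀ y ∈ ball x (ρ/2),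
      ContinuousOn (fun s : ℝ => 1 / (4 * π * ‖y - (a + s • τ)‖)) (Icc 0 L) := by
    intro y hy
    apply ContinuousOn.div continuousOn_const
    · exact (continuous_const.mul (hpath y).norm).continuousOn
    · intro s hs
      have h0 : 0 < ‖y - (a + s • τ)‖ := lt_of_lt_of_le hρ2 (hdist y hy s hs)
      positivity
  have hF'cont : ContinuousOn
      (fun s : ℝ => (-(4 * π * ‖x - (a + s • τ)‖ ^ 3)⁻¹) • (innerSL ℝ (x - (a + s • τ))))
      (Icc 0 L) := by
    have hxb : x ∈ ball x (ρ/2) := mem_ball_self hρ2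
    apply ContinuousOn.smul (M := ℝ) (X := E3 →L[ℝ] ℝ)
    · apply ContinuousOn.neg
      apply ContinuousOn.inv₀
      · exact (continuous_const.mul ((hpath x).norm.pow 3)).continuousOn
      · intro s hs
        have h0 : 0 < ‖x - (a + s • τ)‖ := lt_of_lt_of_le hρ2 (hdist x hxb s hs)
        positivity
    · exact ((innerSL ℝ).continuous.comp (hpath x)).continuousOn
  have hxball : x ∈ ball x (ρ/2) := mem_ball_self hρ2
  -- differentiation under the integral sign
  have hmain : HasFDerivAt (fun y : E3 => ∫ s in (0:ℝ)..L, 1 / (4 * π * ‖y - (a + s • τ)‖))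
      (∫ s in (0:ℝ)..L,
        (-(4 * π * ‖x - (a + s • τ)‖ ^ 3)⁻¹) • (innerSL ℝ (x - (a + s • τ)))) x := by
    apply intervalIntegral.hasFDerivAt_integral_of_dominated_of_fderiv_le
      (F := fun (y : E3) (s : ℝ) => 1 / (4 * π * ‖y - (a + s • τ)‖))
      (F' := fun (y : E3) (s : ℝ) =>
        (-(4 * π * ‖y - (a + s • τ)‖ ^ 3)⁻¹) • (innerSL ℝ (y - (a + s • τ))))
      (bound := fun _ => (4 * π * (ρ/2)^2)⁻¹) (s := ball x (ρ/2)) (ball_mem_nhds x hρ2)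
    · filter_upwards [ball_mem_nhds x hρ2] with y hy
      exact ((hFcont y hy).mono (hIoc ▸ hIccsub)).aestronglyMeasurable
        (hIoc ▸ measurableSet_Ioc)
    · exact ((Set.uIcc_of_le hL0.le).symm ▸ (hFcont x hxball)).intervalIntegrable
    · exact (hF'cont.mono (hIoc ▸ hIccsub)).aestronglyMeasurable (hIoc ▸ measurableSet_Ioc)
    · apply Filter.Eventually.of_forall
      intro s hs y hy
      refine (segPot_kernel_norm _ _).trans ?_
      have h1 : ρ/2 ≤ ‖y - (a + s • τ)‖ := hdist y hy s (hIccsub (hIoc ▸ hs))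
      have h2 : (0:ℝ) < 4 * π * (ρ/2)^2 := by positivity
      apply inv_anti₀ h2
      have : (ρ/2)^2 ≤ ‖y - (a + s • τ)‖^2 := by nlinarith
      nlinarith
    · exact intervalIntegrable_const
    · apply Filter.Eventually.of_forall
      intro s hs y hy
      have h1 : ρ/2 ≤ ‖y - (a + s • τ)‖ := hdist y hy s (hIccsub (hIoc ▸ hs))
      have hne : y ≠ a + s • τ := by
        intro h; rw [h] at h1; simp at h1; linarith
      exact segPot_kernel_hasFDerivAt _ _ hne
  have hGfun : (fun y : E3 => ∫ s in (0:ℝ)..L, 1 / (4 * π * ‖y - (a + s • τ)‖)) = G := by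
    funext y; exact (hG y).symm
  rw [hGfun] at hmain
  refine ⟨hmain.differentiableAt, ?_⟩
  rw [hmain.fderiv]
  set t₀ : ℝ := inner ℝ (x - a) τ with ht₀def
  set sst := max 0 (min t₀ L) with hsstdef
  have hsstIcc : sst ∈ Icc (0:ℝ) L := ⟨le_max_left _ _, max_le hL0.le (min_le_right _ _)⟩
  have hNs : ∀ s : ℝ, ‖x - (a + s • τ)‖^2 = ‖x - a‖^2 - 2*(s*t₀) + s^2 := by
    intro s
    have hv : x - (a + s • τ) = (x - a) - s • τ := by abel
    rw [hv, norm_sub_sq_real, real_inner_smul_right,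
      norm_smul, Real.norm_eq_abs, hτ1, mul_one, sq_abs]
    try rw [← ht₀def]
    try ring
  have hCS : t₀^2 ≤ ‖x - a‖^2 := by
    have h1 : |t₀| ≤ ‖x - a‖ * ‖τ‖ := abs_real_inner_le_norm (x - a) τ
    rw [hτ1, mul_one] at h1
    nlinarith [abs_nonneg t₀, le_abs_self t₀, neg_abs_le t₀]
  have hρs : ρ^2 ≤ ‖x - (a + sst • τ)‖^2 := by
    have h1 : ρ ≤ dist x (a + sst • τ) := Metric.infDist_le_dist_of_mem (hmem sst hsstIcc)
    rw [dist_eq_norm] at h1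
    nlinarith [Metric.infDist_nonneg (x := x) (s := segment ℝ a b)]
  have hquad : ∀ s ∈ Icc (0:ℝ) L, (ρ^2 + (s - sst)^2)/2 ≤ ‖x - (a + s • τ)‖^2 := by
    intro s hs
    have h1 : (sst - t₀)^2 ≤ (s - t₀)^2 ∧ (s - sst)^2 ≤ (s - t₀)^2 := by
      rcases le_total t₀ 0 with h|h
      · have he : sst = 0 := by rw [hsstdef, min_eq_left (h.trans hL0.le), max_eq_left]; linarith [min_le_left t₀ L, min_eq_left (h.trans hL0.le)]
        rw [he]
        constructor <;> nlinarith [hs.1, hs.2]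
      · rcases le_total L t₀ with h'|h'
        · have he : sst = L := by rw [hsstdef, min_eq_right h', max_eq_right hL0.le]
          rw [he]
          constructor <;> nlinarith [hs.1, hs.2]
        · have he : sst = t₀ := by rw [hsstdef, min_eq_left h', max_eq_right h]
          rw [he]
          constructor <;> nlinarith
    have e1 : ‖x - (a + s • τ)‖^2 = (‖x - a‖^2 - t₀^2) + (s - t₀)^2 := by rw [hNs s]; ring
    have e2 : ‖x - (a + sst • τ)‖^2 = (‖x - a‖^2 - t₀^2) + (sst - t₀)^2 := by rw [hNs sst]; ring
    rw [e1]
    rw [e2] at hρs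
    linarith [h1.1, h1.2, hCS]
  -- norm bound on the derivative integrand
  set g : ℝ → ℝ := fun s => 2 * (4*π)⁻¹ * (ρ^2 + (s - sst)^2)⁻¹ with hgdef
  have hgbound : ∀ s ∈ Ioc (0:ℝ) L,
      ‖(-(4 * π * ‖x - (a + s • τ)‖ ^ 3)⁻¹) • (innerSL ℝ (x - (a + s • τ)))‖ ≤ g s := by
    intro s hs
    have hQ : 0 < ρ^2 + (s - sst)^2 := by positivity
    have h2 := hquad s (hIccsub hs)
    refine (segPot_kernel_norm _ _).trans ?_
    have hstep : (4 * π * ‖x - (a + s • τ)‖ ^ 2)⁻¹ ≤ (4 * π * ((ρ^2 + (s - sst)^2)/2))⁻¹ := by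
      apply inv_anti₀ (by positivity)
      nlinarith
    refine hstep.trans_eq ?_
    rw [hgdef]
    field_simp
    try ring
  have hgcont : Continuous g := by
    apply continuous_const.mul
    apply Continuous.inv₀ (by fun_prop)
    intro s; positivity
  have hgint : IntervalIntegrable g volume 0 L := hgcont.intervalIntegrable 0 L
  have hae : ∀ᵐ t ∂(volume.restrict (Set.uIoc (0:ℝ) L)),
      ‖(-(4 * π * ‖x - (a + t • τ)‖ ^ 3)⁻¹) • (innerSL ℝ (x - (a + t • τ)))‖ ≤ g t := by
    rw [ae_restrict_iff' (by rw [hIoc]; exact measurableSet_Ioc)]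
    exact Filter.Eventually.of_forall (fun s hs => hgbound s (hIoc ▸ hs))
  have hnormle := intervalIntegral.norm_integral_le_abs_of_norm_le hae hgint
  refine hnormle.trans ?_
  have habs : |∫ s in (0:ℝ)..L, g s| = ∫ s in (0:ℝ)..L, g s := by
    apply abs_of_nonneg
    apply intervalIntegral.integral_nonneg hL0.le
    intro s _; rw [hgdef]; positivity
  rw [habs, hgdef]
  have hval : (∫ s in (0:ℝ)..L, 2 * (4*π)⁻¹ * (ρ^2 + (s - sst)^2)⁻¹)
      = 2 * (4*π)⁻¹ * ∫ s in (0:ℝ)..L, (ρ^2 + (s - sst)^2)⁻¹ :=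
    intervalIntegral.integral_const_mul _ _
  rw [hval]
  have harc := segPot_arctan_bound hρ sst 0 L
  have h2π : (0:ℝ) < 2 * (4*π)⁻¹ := by positivity
  calc 2 * (4*π)⁻¹ * ∫ s in (0:ℝ)..L, (ρ^2 + (s - sst)^2)⁻¹
      ≤ 2 * (4*π)⁻¹ * (π / ρ) := by
        apply mul_le_mul_of_nonneg_left harc h2π.le
    _ = (2 * ρ)⁻¹ := by field_simp; try ring


theorem gradient_of_segment_potential_in_weighted_L2
    (a b : EuclideanSpace ℝ (Fin 3)) (hab : a ≠ b)
    (L : ℝ) (hL : L = ‖b - a‖)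
    (τ : EuclideanSpace ℝ (Fin 3)) (hτ : τ = L⁻¹ • (b - a))
    (r : EuclideanSpace ℝ (Fin 3) → ℝ) (hr : ∀ x, r x = Metric.infDist x (segment ℝ a b))
    (G : EuclideanSpace ℝ (Fin 3) → ℝ)
    (hG : ∀ y, G y = ∫ s in (0:ℝ)..L, 1 / (4 * Real.pi * ‖y - (a + s • τ)‖)) :
    (∀ x ∉ segment ℝ a b, DifferentiableAt ℝ G x) ∧
    ∀ (Ω : Set (EuclideanSpace ℝ (Fin 3))), MeasurableSet Ω → Bornology.IsBounded Ω →
      ∀ α : ℝ, 0 < α →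
        IntegrableOn (fun x => r x ^ (2 * α) * ‖gradient G x‖ ^ 2) Ω := by
  constructor
  · intro x hx
    exact (segPot_master a b hab L hL τ hτ G hG hx).1
  intro Ω hΩmeas hΩbd α hα
  -- basic facts
  have hπ : (0:ℝ) < π := Real.pi_pos
  have hba' : b - a ≠ 0 := sub_ne_zero_of_ne (Ne.symm hab)
  have hL0 : 0 < L := by rw [hL]; exact norm_pos_iff.mpr hba'
  have hτ1 : ‖τ‖ = 1 := by
    rw [hτ, norm_smul, norm_inv, Real.norm_eq_abs, abs_of_pos hL0, ← hL]
    field_simp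
  have hba : b - a = L • τ := by rw [hτ, smul_smul, mul_inv_cancel₀ hL0.ne', one_smul]
  obtain ⟨u, hu0⟩ := segPot_onb τ hτ1
  -- inner products with u j (j ≠ 0) are constant along the segment
  have horth : ∀ j : Fin 3, j ≠ 0 → (inner ℝ τ (u j) : ℝ) = 0 := by
    intro j hj
    simpa [hu0] using u.orthonormal.2 (Ne.symm hj)
  have hconst : ∀ x : EuclideanSpace ℝ (Fin 3), ∀ q ∈ segment ℝ a b, ∀ j : Fin 3, j ≠ 0 →
      (inner ℝ (x - q) (u j) : ℝ) = inner ℝ (x - a) (u j) := by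
    intro x q hq j hj
    rw [segment_eq_image'] at hq
    obtain ⟨θ, hθ, rfl⟩ := hq
    have hv : x - (a + θ • (b - a)) = (x - a) - (θ * L) • τ := by
      rw [hba, smul_smul]; abel
    rw [hv, inner_sub_left, real_inner_smul_left, horth j hj, mul_zero, sub_zero]
  have habs_le : ∀ x : EuclideanSpace ℝ (Fin 3), ∀ j : Fin 3, j ≠ 0 →
      |(inner ℝ (x - a) (u j) : ℝ)| ≤ r x := by
    intro x j hj
    rw [hr, ← not_lt]
    intro hlt
    obtain ⟨q, hq, hdq⟩ := (Metric.infDist_lt_iff ⟨a, left_mem_segment ℝ a b⟩).mp hlt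
    have hb : |(inner ℝ (x - a) (u j) : ℝ)| ≤ dist x q := by
      rw [← hconst x q hq j hj, dist_eq_norm]
      calc |(inner ℝ (x - q) (u j) : ℝ)| ≤ ‖x - q‖ * ‖u j‖ := abs_real_inner_le_norm _ _
        _ = ‖x - q‖ := by rw [u.orthonormal.1 j, mul_one]
    linarith
  -- measure preserving coordinates
  set ψ : EuclideanSpace ℝ (Fin 3) → (Fin 3 → ℝ) :=
    fun x => (MeasurableEquiv.toLp 2 (Fin 3 → ℝ)).symm (u.repr x) with hψdef
  have hψapp : ∀ x : EuclideanSpace ℝ (Fin 3), ∀ i, ψ x i = (inner ℝ (u i) x : ℝ) := by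
    intro x i
    rw [hψdef]
    exact u.repr_apply_apply x i
  have hψmp : MeasurePreserving ψ volume volume :=
    (EuclideanSpace.volume_preserving_symm_measurableEquiv_toLp (Fin 3)).comp u.measurePreserving_repr
  have hψemb : MeasurableEmbedding ψ :=
    (((u.repr.toHomeomorph).toMeasurableEquiv).trans
      (MeasurableEquiv.toLp 2 (Fin 3 → ℝ)).symm).measurableEmbedding
  -- the bad set
  set Z : Set (EuclideanSpace ℝ (Fin 3)) :=
    (ψ ⁻¹' {y | y 1 = ψ a 1}) ∪ (ψ ⁻¹' {y | y 2 = ψ a 2}) with hZdef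
  have hyp : ∀ (i : Fin 3) (c : ℝ), volume (ψ ⁻¹' {y : Fin 3 → ℝ | y i = c}) = 0 := by
    intro i c
    have hms : MeasurableSet {y : Fin 3 → ℝ | y i = c} := by
      show MeasurableSet ((fun y : Fin 3 → ℝ => y i) ⁻¹' {c})
      exact (measurable_pi_apply i) (measurableSet_singleton c)
    rw [hψmp.measure_preimage hms.nullMeasurableSet]
    rw [show (volume : Measure (Fin 3 → ℝ)) = Measure.pi fun _ => volume from volume_pi]
    haveI : NullSingletonClass ((fun _ : Fin 3 => (volume : Measure ℝ)) i) :=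
      (inferInstance : NullSingletonClass (volume : Measure ℝ))
    exact Measure.pi_hyperplane (μ := fun _ : Fin 3 => (volume : Measure ℝ)) i c
  have hZ0 : volume Z = 0 := measure_union_null (hyp 1 _) (hyp 2 _)
  have hc_ne : ∀ x, x ∉ Z →
      (inner ℝ (x - a) (u 1) : ℝ) ≠ 0 ∧ (inner ℝ (x - a) (u 2) : ℝ) ≠ 0 := by
    intro x hx
    rw [hZdef, Set.mem_union, not_or] at hx
    obtain ⟨h1, h2⟩ := hx
    constructor
    · intro h
      apply h1
      show ψ x 1 = ψ a 1
      rw [hψapp, hψapp]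
      have := real_inner_comm (x - a) (u 1)
      rw [h] at this
      rw [inner_sub_right] at this
      linarith [this.symm]
    · intro h
      apply h2
      show ψ x 2 = ψ a 2
      rw [hψapp, hψapp]
      have := real_inner_comm (x - a) (u 2)
      rw [h] at this
      rw [inner_sub_right] at this
      linarith [this.symm]
  have hrpos : ∀ x, x ∉ Z → 0 < r x := by
    intro x hx
    calc (0:ℝ) < |(inner ℝ (x - a) (u 1) : ℝ)| := abs_pos.mpr (hc_ne x hx).1
      _ ≤ r x := habs_le x 1 (by decide)
  have hxseg : ∀ x, x ∉ Z → x ∉ segment ℝ a b := by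
    intro x hx hmem
    have h := hrpos x hx
    rw [hr, Metric.infDist_zero_of_mem hmem] at h
    exact lt_irrefl _ h
  have hgradbd : ∀ x, x ∉ Z → ‖gradient G x‖ ≤ (2 * r x)⁻¹ := by
    intro x hx
    obtain ⟨_, h2⟩ := segPot_master a b hab L hL τ hτ G hG (hxseg x hx)
    have hge : gradient G x =
        (InnerProductSpace.toDual ℝ (EuclideanSpace ℝ (Fin 3))).symm (fderiv ℝ G x) := rfl
    rw [hge, LinearIsometryEquiv.norm_map, hr]
    exact h2
  set β := 2 * α - 2 with hβdef
  have hpt : ∀ x, x ∉ Z → r x ^ (2*α) * ‖gradient G x‖^2 ≤ (1/4) * r x ^ β := by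
    intro x hx
    have hr0 := hrpos x hx
    have h1 : ‖gradient G x‖^2 ≤ ((2 * r x)⁻¹)^2 :=
      pow_le_pow_left₀ (norm_nonneg _) (hgradbd x hx) 2
    have h2 : ((2 * r x)⁻¹:ℝ)^2 = (1/4) * ((r x ^ (2:ℕ)):ℝ)⁻¹ := by
      rw [mul_inv]; ring
    calc r x ^ (2*α) * ‖gradient G x‖^2
        ≤ r x ^ (2*α) * ((1/4) * ((r x ^ (2:ℕ)):ℝ)⁻¹) := by
          rw [← h2]; exact mul_le_mul_of_nonneg_left h1 (Real.rpow_nonneg hr0.le _)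
      _ = (1/4) * (r x ^ (2*α) * (r x ^ ((2:ℕ):ℝ))⁻¹) := by
          rw [Real.rpow_natCast]; ring
      _ = (1/4) * r x ^ β := by
          rw [← Real.rpow_neg hr0.le, ← Real.rpow_add hr0]
          have he : 2*α + -((2:ℕ):ℝ) = β := by rw [hβdef]; push_cast; ring
          rw [he]
  -- measurability of the integrand
  have hrcont : Continuous r := by
    have : r = fun x => Metric.infDist x (segment ℝ a b) := funext hr
    rw [this]
    exact Metric.continuous_infDist_pt _
  have hfmeas : AEStronglyMeasurable (fun x => r x ^ (2*α) * ‖gradient G x‖^2)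
      (volume.restrict Ω) := by
    apply AEStronglyMeasurable.mul
    · apply Continuous.aestronglyMeasurable
      apply hrcont.rpow_const
      intro x; right; positivity
    · apply Measurable.aestronglyMeasurable
      have hg : Measurable (fun x => gradient G x) := by
        have : (fun x => gradient G x) = fun x =>
            (InnerProductSpace.toDual ℝ (EuclideanSpace ℝ (Fin 3))).symm (fderiv ℝ G x) := rfl
        rw [this]
        exact (LinearIsometryEquiv.continuous _).measurable.comp (measurable_fderiv ℝ G)
      exact hg.norm.pow_const 2
  have hfnonneg : ∀ x, 0 ≤ r x ^ (2*α) * ‖gradient G x‖^2 := by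
    intro x
    have : 0 ≤ r x := by rw [hr]; exact Metric.infDist_nonneg
    positivity
  -- bounded domain
  obtain ⟨R0, hR0⟩ := hΩbd.subset_closedBall a
  set R' := max R0 1 with hR'def
  have hΩR : Ω ⊆ closedBall a R' := hR0.trans (closedBall_subset_closedBall (le_max_left _ _))
  have hR'1 : (1:ℝ) ≤ R' := le_max_right _ _
  have hZae : ∀ᵐ x ∂(volume.restrict Ω), x ∉ Z :=
    ae_restrict_of_ae (measure_eq_zero_iff_ae_notMem.mp hZ0)
  rcases lt_or_ge β 0 with hβneg | hβpos
  · -- singular case: -2 < β < 0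
    set γ := α - 1 with hγdef
    have hγ1 : (-1:ℝ) < γ := by rw [hγdef]; linarith
    have hγ0 : γ ≤ 0 := by rw [hγdef]; linarith [hβneg]
    set F : Fin 3 → ℝ → ℝ := fun i =>
      (Icc (ψ a i - R') (ψ a i + R')).indicator
        (fun t => |t - ψ a i| ^ (if i = 0 then (0:ℝ) else γ)) with hFdef
    have hFint : ∀ i, Integrable (F i) volume := by
      intro i
      rw [hFdef]
      rw [integrable_indicator_iff measurableSet_Icc]
      by_cases hi : i = 0
      · rw [if_pos hi]
        exact segPot_oneD (by norm_num) _ _ (le_trans zero_le_one hR'1)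
      · rw [if_neg hi]
        exact segPot_oneD hγ1 _ _ (le_trans zero_le_one hR'1)
    have hP : Integrable (fun y : Fin 3 → ℝ => ∏ i, F i (y i)) volume :=
      Integrable.fintype_prod hFint
    have hgint : Integrable (fun x : EuclideanSpace ℝ (Fin 3) => ∏ i, F i (ψ x i)) volume :=
      (hψmp.integrable_comp_emb hψemb).mpr hP
    apply Integrable.mono' (((hgint.const_mul (1/4)).integrableOn (s := Ω))) hfmeas
    filter_upwards [ae_restrict_mem hΩmeas, hZae] with x hxΩ hxZ
    have hr0 := hrpos x hxZ
    have hwin : ∀ i : Fin 3, ψ x i ∈ Icc (ψ a i - R') (ψ a i + R') := by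
      intro i
      have h1 : |ψ x i - ψ a i| ≤ R' := by
        rw [hψapp, hψapp, ← inner_sub_right]
        calc |(inner ℝ (u i) (x - a) : ℝ)| ≤ ‖u i‖ * ‖x - a‖ := abs_real_inner_le_norm _ _
          _ = ‖x - a‖ := by rw [u.orthonormal.1 i, one_mul]
          _ ≤ R' := by
              have := hΩR hxΩ
              rwa [mem_closedBall, dist_eq_norm] at this
      obtain ⟨ha1, ha2⟩ := abs_le.mp h1
      rw [mem_Icc]
      constructor <;> linarith
    have hψd : ∀ j : Fin 3, |ψ x j - ψ a j| = |(inner ℝ (x - a) (u j) : ℝ)| := by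
      intro j
      rw [hψapp, hψapp, ← inner_sub_right, real_inner_comm]
    have hprod : (∏ i, F i (ψ x i)) =
        |(inner ℝ (x - a) (u 1) : ℝ)| ^ γ * |(inner ℝ (x - a) (u 2) : ℝ)| ^ γ := by
      have h0 : F 0 (ψ x 0) = 1 := by
        simp only [hFdef]
        rw [Set.indicator_of_mem (hwin 0)]
        simp
      have h1 : F 1 (ψ x 1) = |(inner ℝ (x - a) (u 1) : ℝ)| ^ γ := by
        simp only [hFdef]
        rw [Set.indicator_of_mem (hwin 1)]
        simp [hψd 1]
      have h2 : F 2 (ψ x 2) = |(inner ℝ (x - a) (u 2) : ℝ)| ^ γ := by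
        simp only [hFdef]
        rw [Set.indicator_of_mem (hwin 2)]
        simp [hψd 2]
      rw [Fin.prod_univ_three, h0, h1, h2, one_mul]
    have hc := hc_ne x hxZ
    have habs2 := habs_le x 1 (by decide)
    have habs3 := habs_le x 2 (by decide)
    have hpos2 : 0 < |(inner ℝ (x - a) (u 1) : ℝ)| := abs_pos.mpr hc.1
    have hpos3 : 0 < |(inner ℝ (x - a) (u 2) : ℝ)| := abs_pos.mpr hc.2
    have hsq : |(inner ℝ (x - a) (u 1) : ℝ)| * |(inner ℝ (x - a) (u 2) : ℝ)| ≤ r x ^ (2:ℕ) := by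
      nlinarith
    have hrβ : r x ^ β ≤ |(inner ℝ (x - a) (u 1) : ℝ)| ^ γ * |(inner ℝ (x - a) (u 2) : ℝ)| ^ γ := by
      have e1 : r x ^ β = (r x ^ (2:ℕ) : ℝ) ^ γ := by
        rw [← Real.rpow_natCast (r x) 2, ← Real.rpow_mul hr0.le]
        congr 1
        rw [hβdef, hγdef]; push_cast; ring
      rw [e1]
      calc ((r x ^ (2:ℕ) : ℝ)) ^ γ
          ≤ (|(inner ℝ (x - a) (u 1) : ℝ)| * |(inner ℝ (x - a) (u 2) : ℝ)|) ^ γ :=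
            Real.rpow_le_rpow_of_nonpos (by positivity) hsq hγ0
        _ = _ := Real.mul_rpow (abs_nonneg _) (abs_nonneg _)
    rw [Real.norm_eq_abs, abs_of_nonneg (hfnonneg x)]
    calc r x ^ (2*α) * ‖gradient G x‖^2 ≤ (1/4) * r x ^ β := hpt x hxZ
      _ ≤ (1/4) * (|(inner ℝ (x - a) (u 1) : ℝ)| ^ γ * |(inner ℝ (x - a) (u 2) : ℝ)| ^ γ) := by
          linarith
      _ = (1/4) * ∏ i, F i (ψ x i) := by rw [hprod]
  · -- bounded case: β ≥ 0
    have hrle : ∀ x ∈ Ω, r x ≤ R' := by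
      intro x hx
      rw [hr]
      refine (Metric.infDist_le_dist_of_mem (left_mem_segment ℝ a b)).trans ?_
      exact hΩR hx
    apply Integrable.mono' (g := fun _ => (1/4) * R' ^ β) ?_ hfmeas
    · filter_upwards [ae_restrict_mem hΩmeas, hZae] with x hxΩ hxZ
      rw [Real.norm_eq_abs, abs_of_nonneg (hfnonneg x)]
      calc r x ^ (2*α) * ‖gradient G x‖^2 ≤ (1/4) * r x ^ β := hpt x hxZ
        _ ≤ (1/4) * R' ^ β := by
            have h1 : r x ^ β ≤ R' ^ β := by
              apply Real.rpow_le_rpow ?_ (hrle x hxΩ) hβpos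
              rw [hr]; exact Metric.infDist_nonneg
            linarith
    · refine integrableOn_const ?_
      exact (lt_of_le_of_lt (measure_mono hΩR) measure_closedBall_lt_top).ne

end
end
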